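/- arXiv:1712.02455 — 7 statements merged into one kernel-verified Lean document; each statement's English description precedes it below -/
import Mathlib

section
/- For a tree T of height ω₁ and a specializing map g : T → ω, each set U_n = {t ∈ T : (∃ t' < t, g(t') = n) ∨ (∀ t'' ≥ t, g(t'') ≠ n)} is a dense open subset of T, and ⋂_{n∈ω} U_n = ∅. -/
/-- The sets `U_n = {t ∈ T : (∃ t' < t, g t' = n) ∨ (∀ t'' ≥ t, g t'' ≠ n)}`. -/
def specU {T : Type*} [PartialOrder T] (g : T → ℕ) (n : ℕ) : Set T :=
  {t : T | (∃ t' < t, g t' = n) ∨ ∀ t'', t ≤ t'' → g t'' ≠ n}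

/-- For a tree `T` of height `ω₁` (non-trivial, predecessors well-ordered and
countable) and a specializing map `g : T → ℕ` (injective on chains), each
`U_n = {t : (∃ t' < t, g t' = n) ∨ (∀ t'' ≥ t, g t'' ≠ n)}` is a dense open subset of `T`,
and `⋂ n, U_n = ∅`. -/
theorem stmt_1 {T : Type*} [PartialOrder T]
    (hwo : ∀ t : T, IsChain (· ≤ ·) (Set.Iio t) ∧ (Set.Iio t).IsWF)
    (hct : ∀ t : T, (Set.Iio t).Countable)
    (hnt : ∀ t : T, ∃ a b, t < a ∧ t < b ∧ ∀ c, ¬(a ≤ c ∧ b ≤ c))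
    (g : T → ℕ) (hg : ∀ s t : T, s < t → g s ≠ g t) :
    (∀ n : ℕ,
      (∀ t : T, ∃ u, t ≤ u ∧ u ∈ specU g n) ∧
      (∀ s t : T, s ≤ t → s ∈ specU g n → t ∈ specU g n)) ∧
    (⋂ n, specU g n) = ∅ := by
  constructor
  · intro n
    constructor
    · intro t
      by_cases h : ∃ t'', t ≤ t'' ∧ g t'' = n
      · obtain ⟨t'', htt, hgt⟩ := h
        obtain ⟨a, b, ha, hb, -⟩ := hnt t''
        exact ⟨a, htt.trans ha.le, Or.inl ⟨t'', ha, hgt⟩⟩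
      · push_neg at h
        exact ⟨t, le_refl t, Or.inr h⟩
    · intro s t hst hs
      rcases hs with ⟨t', ht', hgt⟩ | h
      · exact Or.inl ⟨t', ht'.trans_le hst, hgt⟩
      · exact Or.inr fun t'' ht'' => h t'' (hst.trans ht'')
  · ext t
    simp only [Set.mem_iInter, Set.mem_empty_iff_false, iff_false]
    intro h
    rcases h (g t) with ⟨t', ht', hgt⟩ | h'
    · exact hg t' t ht' hgt
    · exact h' t le_rfl rfl
end

section
/- If P is a forcing poset and, for every name for a function from ω to the ground model, some condition decides it to be a ground-model function, then for any countable family of dense open subsets of P the intersection is dense, provided P is a non-trivial tree of height ω₁ that does not split at limit levels. -/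
/-- Let `T` be a non-trivial tree of height `ω₁` with a unique root that does
not split at limit levels (viewed as a forcing where the extension of `t` are the `u ≥ t`).
If every `T`-name for a function from `ω` to the ground model (values in an arbitrary
type `α`, presented combinatorially: `F n p a` means "`p` forces the `n`-th value to be
`a`", persistent, single-valued, densely decided) is decided by a single condition to be
a ground-model function, then for any countable collection of dense open subsets
`{U n : n ∈ ω}` of `T`, the intersection `⋂ n, U n` is dense in `T`. -/
theorem stmt_9 {T : Type*} [PartialOrder T]
    (hwo : ∀ t : T, IsChain (· ≤ ·) (Set.Iio t) ∧ (Set.Iio t).IsWF)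
    (hct : ∀ t : T, (Set.Iio t).Countable)
    (root : T) (hroot : ∀ t, root ≤ t)
    (hnt : ∀ t : T, ∃ a b, t < a ∧ t < b ∧ ∀ c, ¬(a ≤ c ∧ b ≤ c))
    (hlim : ∀ s s' : T, (Set.Iio s).Nonempty →
      (¬∃ m ∈ Set.Iio s, ∀ x ∈ Set.Iio s, x ≤ m) →
      Set.Iio s = Set.Iio s' → s = s')
    (hnonew : ∀ (α : Type) (F : ℕ → T → α → Prop),
      (∀ n (p q : T) a, p ≤ q → F n p a → F n q a) →
      (∀ n (p : T) a b, F n p a → F n p b → a = b) →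
      (∀ n (p : T), ∃ q, p ≤ q ∧ ∃ a, F n q a) →
      ∀ p : T, ∃ q, p ≤ q ∧ ∃ g : ℕ → α, ∀ n, F n q (g n)) :
    ∀ U : ℕ → Set T,
      (∀ n, (∀ t : T, ∃ u, t ≤ u ∧ u ∈ U n) ∧ (∀ s t : T, s ≤ t → s ∈ U n → t ∈ U n)) →
      ∀ t : T, ∃ u, t ≤ u ∧ u ∈ ⋂ n, U n := by
  intro U hU t
  obtain ⟨q, htq, g, hg⟩ := hnonew Unit (fun n p _ => ∃ a ∈ U n, a ≤ p)
    (fun n p q a hpq ⟨b, hbU, hbp⟩ => ⟨b, hbU, hbp.trans hpq⟩)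
    (fun n p a b _ _ => rfl)
    (fun n p => by
      obtain ⟨u, hpu, huU⟩ := (hU n).1 p
      exact ⟨u, hpu, ⟨⟩, u, huU, le_rfl⟩) t
  refine ⟨q, htq, Set.mem_iInter.2 fun n => ?_⟩
  obtain ⟨a, haU, haq⟩ := hg n
  exact (hU n).2 a q haq haU
end

section
/- No countably closed forcing can specialize a nonspecial tree: if T is a tree of height ω₁ that is not special and P is a countably closed forcing poset, then T remains nonspecial in any generic extension by P. -/
private lemma stmt12_exists_lb {P T : Type*} [Preorder P] [PartialOrder T]
    (hcc : ∀ f : ℕ → P, (∀ n, f (n + 1) ≤ f n) → ∃ b, ∀ n, b ≤ f n)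
    (t : T) (hch : IsChain (· ≤ ·) (Set.Iio t)) (hct : (Set.Iio t).Countable)
    (p₀ : P) (p : T → P)
    (hmono : ∀ s₁ s₂, s₁ < s₂ → s₂ < t → p s₂ ≤ p s₁)
    (hle : ∀ s, s < t → p s ≤ p₀) :
    ∃ b, b ≤ p₀ ∧ ∀ s, s < t → b ≤ p s := by
  classical
  rcases Set.eq_empty_or_nonempty (Set.Iio t) with he | hne
  · exact ⟨p₀, le_refl _, fun s hs => absurd (Set.mem_Iio.mpr hs) (by simp [he])⟩
  by_cases hmax : ∃ m, m < t ∧ ∀ s, s < t → s ≤ m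
  · obtain ⟨m, hmt, hm⟩ := hmax
    refine ⟨p m, hle m hmt, fun s hs => ?_⟩
    rcases eq_or_lt_of_le (hm s hs) with h | h
    · exact le_of_eq (by rw [h])
    · exact hmono s m h hmt
  · push_neg at hmax
    have hstrict : ∀ m, m < t → ∃ s, s < t ∧ m < s := by
      intro m hmt
      obtain ⟨s, hst, hns⟩ := hmax m hmt
      rcases hch (show s ∈ Set.Iio t from hst) (show m ∈ Set.Iio t from hmt)
        (fun h => hns (le_of_eq h)) with h | h
      · exact absurd h hns
      · exact ⟨s, hst, lt_of_le_of_ne h (fun h' => hns (le_of_eq h'.symm))⟩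
    obtain ⟨e, he⟩ := Set.Countable.exists_eq_range hct hne
    have hek : ∀ k, e k < t := fun k => by
      have : e k ∈ Set.Iio t := he ▸ Set.mem_range_self k
      exact this
    have hstep : ∀ (m : T), m < t → ∀ (x : T), x < t → ∃ s, s < t ∧ m < s ∧ x ≤ s := by
      intro m hm x hx
      rcases eq_or_ne m x with rfl | hne'
      · obtain ⟨s, h1, h2⟩ := hstrict m hm; exact ⟨s, h1, h2, le_of_lt h2⟩
      rcases hch (Set.mem_Iio.mpr hm) (Set.mem_Iio.mpr hx) hne' with h | h
      · obtain ⟨s, h1, h2⟩ := hstrict x hx; exact ⟨s, h1, lt_of_le_of_lt h h2, le_of_lt h2⟩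
      · obtain ⟨s, h1, h2⟩ := hstrict m hm; exact ⟨s, h1, h2, h.trans (le_of_lt h2)⟩
    let v : ℕ → {s : T // s < t} := fun k => Nat.rec ⟨e 0, hek 0⟩
      (fun k vk => ⟨(hstep vk.1 vk.2 (e (k + 1)) (hek (k + 1))).choose,
        (hstep vk.1 vk.2 (e (k + 1)) (hek (k + 1))).choose_spec.1⟩) k
    have hv1 : ∀ k, (v k).1 < (v (k + 1)).1 := fun k =>
      (hstep (v k).1 (v k).2 (e (k + 1)) (hek (k + 1))).choose_spec.2.1
    have hv2 : ∀ k, e k ≤ (v k).1 := by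
      intro k
      cases k with
      | zero => exact le_refl _
      | succ k => exact (hstep (v k).1 (v k).2 (e (k + 1)) (hek (k + 1))).choose_spec.2.2
    obtain ⟨b, hb⟩ := hcc (fun k => p (v k).1) (fun k => hmono _ _ (hv1 k) (v (k + 1)).2)
    refine ⟨b, (hb 0).trans (hle _ (v 0).2), fun s hs => ?_⟩
    obtain ⟨k, hk⟩ : ∃ k, e k = s := by
      have : s ∈ Set.range e := he ▸ hs
      exact this
    subst hk
    rcases eq_or_lt_of_le (hv2 k) with h | h
    · rw [h]; exact hb k
    · exact (hb k).trans (hmono (e k) (v k).1 h (v k).2)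

/-- No countably closed forcing can specialize a nonspecial tree. Let `T`
be a tree of height `ω₁` that is not special, and let `P` be a countably closed forcing
(forcing convention: `q ≤ p` means `q` is stronger). Then no condition `p₀` forces a name
`ġ` for a specializing function `T → ω`: for every name (given by `R : T → ℕ → Set P`,
where `p ∈ R t n` means "`p ⊩ ġ(t) = n`", persistent, single-valued, densely decided
below `p₀`), some condition below `p₀` forces the same value on two comparable nodes,
i.e. `ġ` is not forced to be injective on chains. -/
theorem stmt_12 {T P : Type*} [PartialOrder T] [Preorder P]
    (hwo : ∀ t : T, IsChain (· ≤ ·) (Set.Iio t) ∧ (Set.Iio t).IsWF)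
    (hct : ∀ t : T, (Set.Iio t).Countable)
    (hns : ¬∃ g : T → ℕ, ∀ s t : T, s < t → g s ≠ g t)
    (hcc : ∀ f : ℕ → P, (∀ n, f (n + 1) ≤ f n) → ∃ b, ∀ n, b ≤ f n) :
    ∀ (p₀ : P) (R : T → ℕ → Set P),
      (∀ (t : T) (n : ℕ) (p q : P), q ≤ p → p ∈ R t n → q ∈ R t n) →
      (∀ (t : T) (n m : ℕ) (p : P), p ∈ R t n → p ∈ R t m → n = m) →
      (∀ (t : T) (p : P), p ≤ p₀ → ∃ q ≤ p, ∃ n, q ∈ R t n) →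
      ∃ (s t : T) (n : ℕ) (p : P), s < t ∧ p ≤ p₀ ∧ p ∈ R s n ∧ p ∈ R t n := by
  classical
  intro p₀ R hpersist hsingle hdense
  by_contra hcon
  push_neg at hcon
  -- well-foundedness of < on T
  have wf : WellFounded ((· < ·) : T → T → Prop) := by
    constructor
    intro t
    have hacc : ∀ s ∈ Set.Iio t, Acc (· < ·) s := by
      intro s hs
      refine Set.WellFoundedOn.induction (hwo t).2 hs ?_
      intro y hy ih
      exact Acc.intro y fun z hz => ih z (lt_trans hz hy) hz
    exact Acc.intro t fun s hs => hacc s hs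
  let F : ∀ t : T, (∀ s, s < t → P × ℕ) → P × ℕ := fun t IH =>
    if h : ∃ pn : P × ℕ, pn.1 ≤ p₀ ∧ pn.1 ∈ R t pn.2 ∧ ∀ s (hs : s < t), pn.1 ≤ (IH s hs).1
    then h.choose else (p₀, 0)
  let G : T → P × ℕ := wf.fix F
  have hGeq : ∀ t, G t = F t (fun s _ => G s) := fun t => wf.fix_eq F t
  have good : ∀ t, (G t).1 ≤ p₀ ∧ (G t).1 ∈ R t (G t).2 ∧ ∀ s, s < t → (G t).1 ≤ (G s).1 := by
    intro t
    induction t using wf.induction with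
    | _ t IH =>
      have hex : ∃ pn : P × ℕ, pn.1 ≤ p₀ ∧ pn.1 ∈ R t pn.2 ∧
          ∀ s (hs : s < t), pn.1 ≤ ((fun s _ => G s) s hs).1 := by
        obtain ⟨b, hb0, hbs⟩ := stmt12_exists_lb hcc t (hwo t).1 (hct t) p₀ (fun s => (G s).1)
          (fun s₁ s₂ h12 h2t => (IH s₂ h2t).2.2 s₁ h12) (fun s hst => (IH s hst).1)
        obtain ⟨q, hq, n, hqn⟩ := hdense t b hb0
        exact ⟨(q, n), hq.trans hb0, hqn, fun s hs => hq.trans (hbs s hs)⟩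
      have : G t = hex.choose := by
        rw [hGeq t]
        exact dif_pos hex
      rw [this]
      exact hex.choose_spec
  apply hns
  refine ⟨fun t => (G t).2, fun s t hst hgeq => ?_⟩
  have hs := good s
  have ht := good t
  have h1 : (G t).1 ∈ R s (G s).2 :=
    hpersist s (G s).2 (G s).1 (G t).1 (ht.2.2 s hst) hs.2.1
  have h2 : (G t).1 ∈ R t (G s).2 := by
    rw [show (G s).2 = (G t).2 from hgeq]
    exact ht.2.1
  exact hcon s t (G s).2 (G t).1 hst ht.1 h1 h2
end

section
/- Cohen forcing cannot specialize a nonspecial tree: if T is a nonspecial tree of height ω₁ and λ is any cardinal, then Add(ω,λ) forces that T is nonspecial. -/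
/-- The Cohen forcing `Add(ω, λ)` (with index set `ι` of size `λ`): finite partial
functions from `ι × ℕ` to `2`, ordered by reverse inclusion (stronger = larger). -/
def Cohen (ι : Type*) : Type _ :=
  {f : ι × ℕ → Option Bool // {x | f x ≠ none}.Finite}

instance (ι : Type*) : Preorder (Cohen ι) where
  le q p := ∀ x b, p.1 x = some b → q.1 x = some b
  le_refl := by intro a x b h; exact h
  le_trans := by intro a b c hab hbc x v h; exact hab x v (hbc x v h)

/-!
Suppose a Cohen condition forced a specializing map `ġ` on a nonspecial tree. Deciding `ġ(t)`
below it for every node `t` and pigeonholing on the decided value leaves a nonspecial set of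
nodes with conditions `P t` forcing the same value, so it suffices to find comparable `s < t`
there with `P s` and `P t` compatible. If all comparable pairs were incompatible, choosing for
each node an incompatible predecessor is a regressive map, so by the Pressing Down Lemma the
predecessor is a fixed `u` on a nonspecial set; pigeonholing once more on `P t` restricted to
the finite support of `P u`, the conditions `P t` all agree on that support, and each of them
disagrees with `P u` somewhere on it. Adding that support to the set on which the conditions
are known to agree strictly shrinks the part of each `P t` outside it, which cannot go on
forever.
-/

def IsTree (T : Type*) [PartialOrder T] : Prop :=
  ∀ t : T, IsChain (· ≤ ·) (Set.Iio t) ∧ (Set.Iio t).IsWF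

section Special

variable {T : Type*} [PartialOrder T]

def SpecialOn (A : Set T) : Prop :=
  ∃ g : T → ℕ, ∀ s ∈ A, ∀ t ∈ A, s < t → g s ≠ g t

theorem exists_lt_of_not_specialOn {S : Set T} (hS : ¬SpecialOn S) :
    ∃ s ∈ S, ∃ t ∈ S, s < t := by
  by_contra! h
  exact hS ⟨fun _ => 0, fun s hs t ht hst _ => h s hs t ht hst⟩

theorem exists_not_specialOn_fiber {β : Type*} [Countable β] {S : Set T}
    (hS : ¬SpecialOn S) (c : T → β) : ∃ b, ¬SpecialOn {t ∈ S | c t = b} := by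
  by_contra! h
  choose g hg using h
  obtain ⟨e, he⟩ := Countable.exists_injective_nat β
  refine hS ⟨fun t => Nat.pair (e (c t)) (g (c t) t), fun s hs t ht hst hg' => ?_⟩
  obtain ⟨hc, hgst⟩ := Nat.pair_eq_pair.mp hg'
  have hc : c s = c t := he hc
  exact hg (c t) s ⟨hs, hc⟩ t ⟨ht, rfl⟩ hst (hc ▸ hgst)

theorem wellFounded_lt_of_isWF_Iio (h : ∀ t : T, (Set.Iio t).IsWF) :
    WellFounded ((· < ·) : T → T → Prop) :=
  ⟨fun t => Acc.intro t fun _ hst => (h t).induction hst fun y hy ih =>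
    Acc.intro y fun z hzy => ih z (hzy.trans hy) hzy⟩

theorem exists_not_specialOn_fiber_of_regressive (hT : IsTree T) {S : Set T}
    (hS : ¬SpecialOn S) (f : T → T)
    (hf : ∀ t ∈ S, (∃ s ∈ S, s < t) → f t ∈ S ∧ f t < t) :
    ∃ u, ¬SpecialOn {t ∈ S | (∃ s ∈ S, s < t) ∧ f t = u} := by
  classical
  by_contra! h
  choose g hg using h
  have wf := wellFounded_lt_of_isWF_Iio fun t => (hT t).2
  -- `code t` lists the values of the specializing maps along the orbit `t, f t, f (f t), …`
  let code : T → List ℕ := wf.fix fun t ih =>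
    if ht : t ∈ S ∧ ∃ s ∈ S, s < t then g (f t) t :: ih (f t) (hf t ht.1 ht.2).2 else []
  have hcode : ∀ t, code t =
      if ht : t ∈ S ∧ ∃ s ∈ S, s < t then g (f t) t :: code (f t) else [] :=
    fun t => wf.fix_eq _ t
  have code_ne : ∀ t, ∀ s ∈ S, t ∈ S → s < t → code s ≠ code t := by
    intro t
    induction t using wf.induction with
    | _ t ih =>
    intro s hs ht hst heq
    have ht' : ∃ r ∈ S, r < t := ⟨s, hs, hst⟩
    by_cases hs' : ∃ r ∈ S, r < s
    · rw [hcode s, hcode t, dif_pos ⟨hs, hs'⟩, dif_pos ⟨ht, ht'⟩] at heq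
      obtain ⟨hhead, htail⟩ := List.cons_eq_cons.mp heq
      obtain ⟨hfsS, hfs⟩ := hf s hs hs'
      obtain ⟨hftS, hft⟩ := hf t ht ht'
      rcases eq_or_ne (f s) (f t) with hfst | hfst
      · exact hg (f t) s ⟨hs, hs', hfst⟩ t ⟨ht, ht', rfl⟩ hst (hfst ▸ hhead)
      rcases (hT t).1.total (hfs.trans hst) hft with hle | hle
      · exact ih (f t) hft (f s) hfsS hftS (hle.lt_of_ne hfst) htail
      · exact ih (f s) (hfs.trans hst) (f t) hftS hfsS (hle.lt_of_ne hfst.symm) htail.symm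
    · rw [hcode s, hcode t, dif_neg fun h => hs' h.2, dif_pos ⟨ht, ht'⟩] at heq
      exact List.cons_ne_nil _ _ heq.symm
  exact hS ⟨fun t => Encodable.encode (code t),
    fun s hs t ht hst he => code_ne t s hs ht hst (Encodable.encode_injective he)⟩

end Special

namespace Cohen

variable {ι : Type*}

def supp (p : Cohen ι) : Set (ι × ℕ) := {x | p.1 x ≠ none}

theorem finite_supp (p : Cohen ι) : p.supp.Finite := p.2

def Compatible (p q : Cohen ι) : Prop := Set.EqOn p.1 q.1 (p.supp ∩ q.supp)

theorem Compatible.exists_le {p q : Cohen ι} (h : p.Compatible q) : ∃ r, r ≤ p ∧ r ≤ q := by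
  refine ⟨⟨fun x => if p.1 x = none then q.1 x else p.1 x,
    (p.finite_supp.union q.finite_supp).subset fun x hx => ?_⟩, fun x b hb => ?_, fun x b hb => ?_⟩
  · by_cases hp : p.1 x = none <;> simp_all [supp]
  · simp [hb]
  · change (if p.1 x = none then q.1 x else p.1 x) = some b
    by_cases hp : p.1 x = none
    · rw [if_pos hp, hb]
    · rw [if_neg hp, h ⟨hp, by simp [supp, hb]⟩, hb]

end Cohen

section Compatible

variable {T : Type*} [PartialOrder T] {ι : Type*}

def AgreeOn (P : T → Cohen ι) (S : Set T) (D : Set (ι × ℕ)) : Prop :=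
  ∀ s ∈ S, ∀ t ∈ S, Set.EqOn (P s).1 (P t).1 D

theorem exists_agreeOn_ncard_lt_of_incompatible (hT : IsTree T) (P : T → Cohen ι)
    {S : Set T} {D : Set (ι × ℕ)} (hS : ¬SpecialOn S) (hD : AgreeOn P S D)
    (hno : ∀ s ∈ S, ∀ t ∈ S, s < t → ¬(P s).Compatible (P t)) :
    ∃ S' ⊆ S, ∃ D', ¬SpecialOn S' ∧ AgreeOn P S' D' ∧
      ∀ t ∈ S', ((P t).supp \ D').ncard < ((P t).supp \ D).ncard := by
  have hpred : ∀ t ∈ S, (∃ s ∈ S, s < t) → ∃ u ∈ S, u < t ∧ ¬(P u).Compatible (P t) :=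
    fun t ht ⟨s, hs, hst⟩ => ⟨s, hs, hst, hno s hs t ht hst⟩
  choose! f hfS hflt hfinc using hpred
  obtain ⟨u, hu⟩ := exists_not_specialOn_fiber_of_regressive hT hS f
    fun t ht hne => ⟨hfS t ht hne, hflt t ht hne⟩
  have : Finite (P u).supp := (P u).finite_supp.to_subtype
  obtain ⟨v, hv⟩ := exists_not_specialOn_fiber hu fun t (x : (P u).supp) => (P t).1 x
  refine ⟨_, fun t ht => ht.1.1, D ∪ (P u).supp, hv, ?_, ?_⟩
  · rintro s ⟨⟨hs, -⟩, hsv⟩ t ⟨⟨ht, -⟩, htv⟩ x (hx | hx)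
    · exact hD s hs t ht hx
    · exact congrFun (hsv.trans htv.symm) ⟨x, hx⟩
  · rintro t ⟨⟨ht, hne, rfl⟩, -⟩
    have hinc := hfinc t ht hne
    simp only [Cohen.Compatible, Set.EqOn, not_forall] at hinc
    obtain ⟨x, ⟨hxf, hxt⟩, hx⟩ := hinc
    have hxD : x ∉ D := fun hxD => hx (hD _ (hfS t ht hne) t ht hxD)
    refine Set.ncard_lt_ncard ?_ (P t).finite_supp.sdiff
    exact (Set.ssubset_iff_of_subset (Set.sdiff_subset_sdiff_right Set.subset_union_left)).mpr
      ⟨x, ⟨hxt, hxD⟩, fun h => h.2 (Or.inr hxf)⟩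

theorem exists_lt_compatible_of_agreeOn (hT : IsTree T) (P : T → Cohen ι) (k : ℕ) :
    ∀ (S : Set T) (D : Set (ι × ℕ)), ¬SpecialOn S → AgreeOn P S D →
      (∀ t ∈ S, ((P t).supp \ D).ncard ≤ k) →
      ∃ s ∈ S, ∃ t ∈ S, s < t ∧ (P s).Compatible (P t) := by
  induction k with
  | zero =>
    intro S D hS hD hk
    obtain ⟨s, hs, t, ht, hst⟩ := exists_lt_of_not_specialOn hS
    have hsD : (P s).supp ⊆ D := Set.sdiff_eq_empty.mp <|
      (Set.ncard_eq_zero (P s).finite_supp.sdiff).mp (Nat.le_zero.mp (hk s hs))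
    exact ⟨s, hs, t, ht, hst, (hD s hs t ht).mono (Set.inter_subset_left.trans hsD)⟩
  | succ k ih =>
    intro S D hS hD hk
    by_contra! hno
    obtain ⟨S', hS'S, D', hS', hD', hlt⟩ :=
      exists_agreeOn_ncard_lt_of_incompatible hT P hS hD hno
    obtain ⟨s, hs, t, ht, hst, hc⟩ :=
      ih S' D' hS' hD' fun t ht => Nat.lt_succ_iff.mp ((hlt t ht).trans_le (hk t (hS'S ht)))
    exact hno s (hS'S hs) t (hS'S ht) hst hc

theorem exists_lt_compatible (hT : IsTree T) {S : Set T} (hS : ¬SpecialOn S)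
    (P : T → Cohen ι) : ∃ s ∈ S, ∃ t ∈ S, s < t ∧ (P s).Compatible (P t) := by
  obtain ⟨k, hk⟩ := exists_not_specialOn_fiber hS fun t => (P t).supp.ncard
  obtain ⟨s, hs, t, ht, hst, hc⟩ := exists_lt_compatible_of_agreeOn hT P k _ ∅ hk
    (fun _ _ _ _ _ h => h.elim) fun t ht => by rw [Set.sdiff_empty, ht.2]
  exact ⟨s, hs.1, t, ht.1, hst, hc⟩

end Compatible

theorem stmt_13_general {T : Type*} [PartialOrder T] (ι : Type*)
    (hwo : ∀ t : T, IsChain (· ≤ ·) (Set.Iio t) ∧ (Set.Iio t).IsWF)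
    (hns : ¬∃ g : T → ℕ, ∀ s t : T, s < t → g s ≠ g t) :
    ∀ (p₀ : Cohen ι) (R : T → ℕ → Set (Cohen ι)),
      (∀ (t : T) (n : ℕ) (p q : Cohen ι), q ≤ p → p ∈ R t n → q ∈ R t n) →
      (∀ (t : T) (n m : ℕ) (p : Cohen ι), p ∈ R t n → p ∈ R t m → n = m) →
      (∀ (t : T) (p : Cohen ι), p ≤ p₀ → ∃ q ≤ p, ∃ n, q ∈ R t n) →
      ∃ (s t : T) (n : ℕ) (p : Cohen ι), s < t ∧ p ≤ p₀ ∧ p ∈ R s n ∧ p ∈ R t n := by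
  intro p₀ R hR _ hden
  choose P hP N hPN using fun t => hden t p₀ le_rfl
  have huniv : ¬SpecialOn (Set.univ : Set T) :=
    fun ⟨g, hg⟩ => hns ⟨g, fun s t => hg s trivial t trivial⟩
  obtain ⟨n, hn⟩ := exists_not_specialOn_fiber huniv N
  obtain ⟨s, ⟨-, hs⟩, t, ⟨-, ht⟩, hst, hc⟩ := exists_lt_compatible hwo hn P
  obtain ⟨r, hrs, hrt⟩ := hc.exists_le
  exact ⟨s, t, n, r, hst, hrs.trans (hP s), hR _ _ _ _ hrs (hs ▸ hPN s),
    hR _ _ _ _ hrt (ht ▸ hPN t)⟩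

/-- Cohen forcing cannot specialize a nonspecial tree. If `T` is a
nonspecial tree of height `ω₁` and `λ` is any cardinal (index set `ι`), then
`Add(ω, λ)` forces that `T` is nonspecial: no condition `p₀` forces a name `ġ` for a
specializing function (the name given by `R : T → ℕ → Set (Cohen ι)`, where
`p ∈ R t n` means "`p ⊩ ġ(t) = n`", persistent, single-valued, densely decided below
`p₀`): some condition below `p₀` forces equal values on two comparable nodes. -/
theorem stmt_13 {T : Type*} [PartialOrder T] (ι : Type*)
    (hwo : ∀ t : T, IsChain (· ≤ ·) (Set.Iio t) ∧ (Set.Iio t).IsWF)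
    (hct : ∀ t : T, (Set.Iio t).Countable)
    (hns : ¬∃ g : T → ℕ, ∀ s t : T, s < t → g s ≠ g t) :
    ∀ (p₀ : Cohen ι) (R : T → ℕ → Set (Cohen ι)),
      (∀ (t : T) (n : ℕ) (p q : Cohen ι), q ≤ p → p ∈ R t n → q ∈ R t n) →
      (∀ (t : T) (n m : ℕ) (p : Cohen ι), p ∈ R t n → p ∈ R t m → n = m) →
      (∀ (t : T) (p : Cohen ι), p ≤ p₀ → ∃ q ≤ p, ∃ n, q ∈ R t n) →
      ∃ (s t : T) (n : ℕ) (p : Cohen ι), s < t ∧ p ≤ p₀ ∧ p ∈ R s n ∧ p ∈ R t n :=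
  stmt_13_general ι hwo hns
end

section
/- Pressing Down Lemma for trees (Todorčević): if T is a nonspecial tree and f : T → T is regressive (f(t) <_T t for all t other than the root), then there exist a nonspecial subtree T' ⊆ T and s ∈ T such that f takes the constant value s on T'. -/
/-- Pressing Down Lemma for trees, Todorčević: if `T` is a nonspecial tree
(of height `ω₁`, with a unique root) and `f : T → T` is regressive (`f t < t` for all
`t` other than the root), then there are a nonspecial subtree `T' ⊆ T` and `s ∈ T` such
that `f` takes the constant value `s` on `T'`. -/
theorem stmt_14 {T : Type*} [PartialOrder T]
    (hwo : ∀ t : T, IsChain (· ≤ ·) (Set.Iio t) ∧ (Set.Iio t).IsWF)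
    (hct : ∀ t : T, (Set.Iio t).Countable)
    (root : T) (hroot : ∀ t, root ≤ t)
    (hns : ¬∃ g : T → ℕ, ∀ s t : T, s < t → g s ≠ g t)
    (f : T → T) (hreg : ∀ t : T, t ≠ root → f t < t) :
    ∃ (T' : Set T) (s : T),
      (¬∃ g : T → ℕ, ∀ a ∈ T', ∀ b ∈ T', a < b → g a ≠ g b) ∧
      ∀ t ∈ T', f t = s := by
  classical
  by_contra hcon
  push_neg at hcon
  -- Every fiber of `f` is special.
  have hspec : ∀ s : T, ∃ g : T → ℕ,
      ∀ a, f a = s → ∀ b, f b = s → a < b → g a ≠ g b := by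
    intro s
    by_contra h
    push_neg at h
    obtain ⟨t, ht, hne⟩ := hcon (f ⁻¹' {s}) s (by
      intro g
      obtain ⟨a, ha, b, hb, hab, heq2⟩ := h g
      exact ⟨a, ha, b, hb, hab, heq2⟩)
    exact hne ht
  choose G hG using hspec
  -- Every `f`-orbit reaches the root in finitely many steps,
  -- since `Set.Iio t` is well-founded.
  have horbit : ∀ t : T, ∃ n, f^[n] t = root := by
    intro t
    by_contra h
    push_neg at h
    have hdec : ∀ k, f^[k + 1] t < f^[k] t := by
      intro k
      have := hreg (f^[k] t) (h k)
      simpa [Function.iterate_succ_apply'] using this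
    have hmem : ∀ k, f^[k + 1] t ∈ Set.Iio t := by
      intro k
      induction k with
      | zero => simpa using hdec 0
      | succ k ih => exact lt_trans (hdec (k + 1)) ih
    have hwf := (hwo t).2
    rw [Set.isWF_iff_no_descending_seq] at hwf
    refine hwf (fun k => f^[k + 1] t) ?_ (fun k => hmem k)
    exact strictAnti_nat_of_succ_lt fun k => hdec (k + 1)
  set nf : T → ℕ := fun t => Nat.find (horbit t) with hnf
  -- Along an orbit, elements only decrease (before reaching the root).
  have hle : ∀ x : T, ∀ j, j ≤ nf x → f^[j] x ≤ x := by
    intro x j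
    induction j with
    | zero => intro _; simp
    | succ j ih =>
      intro hj
      have hj' : j < nf x := Nat.lt_of_succ_le hj
      have hne : f^[j] x ≠ root := Nat.find_min (horbit x) hj'
      have hlt : f^[j + 1] x < f^[j] x := by
        simpa [Function.iterate_succ_apply'] using hreg _ hne
      exact le_of_lt (lt_of_lt_of_le hlt (ih (le_of_lt hj')))
  -- The specializing map for the whole tree.
  set L : T → List ℕ :=
    fun t => (List.range (nf t)).map (fun k => G (f^[k + 1] t) (f^[k] t)) with hL
  refine hns ⟨fun t => Nat.pair (nf t) (Encodable.encode (L t)), ?_⟩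
  intro s t hst heq
  have hpair := Nat.pair_eq_pair.mp heq
  have hn : nf s = nf t := hpair.1
  have hLeq : L s = L t := Encodable.encode_injective hpair.2
  -- There is a `k ≤ nf s` where the two orbits merge.
  have hPex : ∃ k, f^[k] s = f^[k] t ∧ k ≤ nf s := by
    refine ⟨nf s, ?_, le_rfl⟩
    have h1 : f^[nf s] s = root := Nat.find_spec (horbit s)
    have h2 : f^[nf s] t = root := by
      rw [hn]; exact Nat.find_spec (horbit t)
    rw [h1, h2]
  have hk0eq := (Nat.find_spec hPex).1
  have hk0le := (Nat.find_spec hPex).2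
  have hk0ne : Nat.find hPex ≠ 0 := by
    intro h0
    rw [h0] at hk0eq
    simp only [Function.iterate_zero, id] at hk0eq
    exact absurd hk0eq (ne_of_lt hst)
  obtain ⟨k, hk⟩ : ∃ k, Nat.find hPex = k + 1 :=
    ⟨Nat.find hPex - 1, (Nat.succ_pred_eq_of_ne_zero hk0ne).symm⟩
  rw [hk] at hk0eq hk0le
  have hkn : k < nf s := by omega
  -- The orbits differ at step `k` but agree at step `k+1`.
  have hab : f^[k] s ≠ f^[k] t := by
    have hmin := Nat.find_min hPex (show k < Nat.find hPex by omega)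
    intro h
    exact hmin ⟨h, by omega⟩
  set a : T := f^[k] s with hadef
  set b : T := f^[k] t with hbdef
  set u : T := f^[k + 1] s with hudef
  have hu2 : f^[k + 1] t = u := hk0eq.symm
  have hfa : f a = u := by rw [hadef, hudef, Function.iterate_succ_apply']
  have hfb : f b = u := by rw [hbdef, ← hu2, Function.iterate_succ_apply']
  -- The colors at step `k` agree.
  have hGeq : G u a = G u b := by
    have h1 : (L s)[k]? = (L t)[k]? := by rw [hLeq]
    have hkn' : k < nf t := by rw [← hn]; exact hkn
    rw [hL] at h1
    simp only [List.getElem?_map, List.getElem?_range hkn,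
      List.getElem?_range hkn', Option.map_some] at h1
    have h2 := Option.some_injective _ h1
    rw [← hudef, ← hadef, ← hbdef, hu2] at h2
    exact h2
  -- `a` and `b` are distinct comparable elements of the fiber over `u`.
  have has : a ≤ s := hle s k (le_of_lt hkn)
  have hbt : b ≤ t := by
    refine hle t k ?_
    rw [← hn]; exact le_of_lt hkn
  have hat : a < t := lt_of_le_of_lt has hst
  have hcomp : a < b ∨ b < a := by
    rcases eq_or_lt_of_le hbt with hbe | hbl
    · left; rw [hbe]; exact hat
    · have := (hwo t).1 hat hbl hab
      rcases this with h | h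
      · exact Or.inl (lt_of_le_of_ne h hab)
      · exact Or.inr (lt_of_le_of_ne h (Ne.symm hab))
  rcases hcomp with h | h
  · exact hG u a hfa b hfb h hGeq
  · exact hG u b hfb a hfa h hGeq.symm
end

section
/- Baumgartner's characterization: for a tree T, the finite specializing poset S(T) (finite partial functions s : T → ω injective on chains, ordered by reverse inclusion) is c.c.c. if and only if T has no uncountable branch. -/
/-- Baumgartner's specializing poset `S(T)`: finite partial functions `T → ℕ` that are
injective on chains, ordered by reverse inclusion (stronger = larger). -/
def SpecPoset (T : Type*) [PartialOrder T] : Type _ :=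
  {s : T → Option ℕ // {t | s t ≠ none}.Finite ∧
    ∀ a b : T, a < b → ∀ n : ℕ, s a = some n → s b ≠ some n}

instance (T : Type*) [PartialOrder T] : Preorder (SpecPoset T) where
  le q p := ∀ t n, p.1 t = some n → q.1 t = some n
  le_refl := by intro a t n h; exact h
  le_trans := by intro a b c hab hbc t n h; exact hab t n (hbc t n h)

open Set

namespace Stmt15Aux

lemma nonempty_of_not_countable {α : Type*} {S : Set α} (h : ¬S.Countable) : S.Nonempty :=
  Set.nonempty_iff_ne_empty.2 (fun he => h (he ▸ Set.countable_empty))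

lemma uncountable_diff {α : Type*} {P B : Set α} (hP : ¬P.Countable) (hB : B.Countable) :
    ¬(P \ B).Countable := fun h =>
  hP ((h.union hB).mono (fun x hx => (em (x ∈ B)).elim Or.inr (fun hx' => Or.inl ⟨hx, hx'⟩)))

lemma countable_of_injOn_image {α β : Type*} {f : α → β} {S : Set α}
    (hinj : Set.InjOn f S) (h : (f '' S).Countable) : S.Countable := by
  have hc : Countable (f '' S) := h.to_subtype
  have hi : Function.Injective
      (fun x : S => (⟨f x, Set.mem_image_of_mem _ x.2⟩ : f '' S)) := by
    rintro ⟨a, ha⟩ ⟨b, hb⟩ hab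
    exact Subtype.ext (hinj ha hb (congrArg Subtype.val hab))
  exact Set.countable_coe_iff.1 hi.countable

/-- In a chain, every finite nonempty subset has a maximum. -/
lemma chain_finset_max {T : Type*} [PartialOrder T] {C : Set T}
    (hch : IsChain (· ≤ ·) C) (s : Finset T) (hs : s.Nonempty) (hsub : ↑s ⊆ C) :
    ∃ m ∈ s, ∀ y ∈ s, y ≤ m := by
  classical
  induction hs using Finset.Nonempty.cons_induction with
  | singleton a => exact ⟨a, by simp⟩
  | cons a t hat ht ih =>
    obtain ⟨m, hm, hmax⟩ := ih (by intro x hx; exact hsub (by simp [hx]))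
    have haC : a ∈ C := hsub (by simp)
    have hmC : m ∈ C := hsub (by simp [hm])
    have hcomp : a ≤ m ∨ m ≤ a := by
      rcases eq_or_ne a m with rfl | hne
      · exact Or.inl le_rfl
      · exact hch haC hmC hne
    rcases hcomp with hle | hle
    · refine ⟨m, Finset.mem_cons.2 (Or.inr hm), ?_⟩
      intro y hy
      rcases Finset.mem_cons.1 hy with rfl | hy
      · exact hle
      · exact hmax y hy
    · refine ⟨a, Finset.mem_cons_self a t, ?_⟩
      intro y hy
      rcases Finset.mem_cons.1 hy with rfl | hy
      · exact le_rfl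
      · exact (hmax y hy).trans hle

/-- If every element of a chain `C` is strictly below some member of a finite nonempty set `s`,
then some member of `s` is strictly above the whole of `C`. -/
lemma cof_pigeon {T : Type*} [PartialOrder T] {C : Set T}
    (hch : IsChain (· ≤ ·) C) (s : Finset T) (hs : s.Nonempty)
    (h : ∀ c ∈ C, ∃ x ∈ s, c < x) :
    ∃ x ∈ s, ∀ c ∈ C, c < x := by
  classical
  by_contra hcon
  push_neg at hcon
  -- for each x ∈ s pick a counterexample c with ¬ c < x
  have h' : ∀ x : {x // x ∈ s}, ∃ c, c ∈ C ∧ ¬ c < x.1 := by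
    rintro ⟨x, hx⟩
    obtain ⟨c, hc1, hc2⟩ := hcon x hx
    exact ⟨c, hc1, hc2⟩
  choose w hwC hwlt using h'
  have hsne : s.attach.Nonempty := by simpa using hs
  obtain ⟨m, hm, hmax⟩ := chain_finset_max hch (s.attach.image w)
    (hsne.image w) (by
      intro y hy
      simp only [Finset.coe_image, Set.mem_image] at hy
      obtain ⟨x, _, rfl⟩ := hy
      exact hwC x)
  have hmC : m ∈ C := by
    simp only [Finset.mem_image] at hm
    obtain ⟨x, _, rfl⟩ := hm
    exact hwC x
  obtain ⟨x₀, hx₀, hmx₀⟩ := h m hmC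
  have : w ⟨x₀, hx₀⟩ ≤ m := hmax _ (Finset.mem_image.2 ⟨⟨x₀, hx₀⟩, Finset.mem_attach _ _, rfl⟩)
  exact hwlt ⟨x₀, hx₀⟩ (lt_of_le_of_lt this hmx₀)

/-- Countability of the set of indices whose (pairwise disjoint) finite sets meet a
countable set. -/
lemma meet_countable {ι T : Type*} (F : ι → Finset T) (J : Set ι)
    (hdisj : ∀ i ∈ J, ∀ j ∈ J, i ≠ j → Disjoint (F i) (F j))
    {A : Set T} (hA : A.Countable) :
    {i ∈ J | ∃ x ∈ F i, x ∈ A}.Countable := by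
  set S := {i ∈ J | ∃ x ∈ F i, x ∈ A} with hS
  have hwit : ∀ i : S, ∃ x, x ∈ F i.1 ∧ x ∈ A := by
    rintro ⟨i, hi⟩; obtain ⟨-, x, hx1, hx2⟩ := hi; exact ⟨x, hx1, hx2⟩
  choose w hwF hwA using hwit
  have : Countable A := hA.to_subtype
  have hinj : Function.Injective (fun i : S => (⟨w i, hwA i⟩ : A)) := by
    rintro ⟨i, hi⟩ ⟨j, hj⟩ hij
    simp only [Subtype.mk.injEq] at hij ⊢
    by_contra hne
    exact (Finset.disjoint_left.1 (hdisj i hi.1 j hj.1 hne)) (hwF ⟨i, hi⟩)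
      (hij ▸ hwF ⟨j, hj⟩)
  have : Countable S := hinj.countable
  exact Set.countable_coe_iff.1 this


/-- Zorn extraction: a bipartite relation with countable degrees on two uncountable sets
admits an uncountable independent rectangle. -/
lemma zorn_indep_rect {ι : Type*} {P Q : Set ι} (hP : ¬P.Countable) (hQ : ¬Q.Countable)
    (E : ι → ι → Prop)
    (hL : ∀ i ∈ P, {i' ∈ Q | E i i'}.Countable)
    (hR : ∀ i' ∈ Q, {i ∈ P | E i i'}.Countable) :
    ∃ A A' : Set ι, A ⊆ P ∧ A' ⊆ Q ∧ ¬A.Countable ∧ ¬A'.Countable ∧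
      ∀ i ∈ A, ∀ i' ∈ A', ¬E i i' := by
  classical
  set 𝒮 : Set (Set (ι × ι)) :=
    {S | S ⊆ P ×ˢ Q ∧ (∀ p ∈ S, ∀ q ∈ S, ¬E p.1 q.2) ∧
      Set.InjOn Prod.fst S ∧ Set.InjOn Prod.snd S} with h𝒮
  obtain ⟨S, hSmax⟩ := zorn_subset 𝒮 (by
    intro c hc hchain
    refine ⟨⋃₀ c, ⟨?_, ?_, ?_, ?_⟩, fun s hs => Set.subset_sUnion_of_mem hs⟩
    · intro x hx
      obtain ⟨s, hs, hxs⟩ := hx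
      exact (hc hs).1 hxs
    · rintro p ⟨s, hs, hps⟩ q ⟨t, ht, hqt⟩
      rcases eq_or_ne s t with rfl | hst
      · exact (hc hs).2.1 p hps q hqt
      · rcases hchain hs ht hst with h | h
        · exact (hc ht).2.1 p (h hps) q hqt
        · exact (hc hs).2.1 p hps q (h hqt)
    · rintro p ⟨s, hs, hps⟩ q ⟨t, ht, hqt⟩ hpq
      rcases eq_or_ne s t with rfl | hst
      · exact (hc hs).2.2.1 hps hqt hpq
      · rcases hchain hs ht hst with h | h
        · exact (hc ht).2.2.1 (h hps) hqt hpq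
        · exact (hc hs).2.2.1 hps (h hqt) hpq
    · rintro p ⟨s, hs, hps⟩ q ⟨t, ht, hqt⟩ hpq
      rcases eq_or_ne s t with rfl | hst
      · exact (hc hs).2.2.2 hps hqt hpq
      · rcases hchain hs ht hst with h | h
        · exact (hc ht).2.2.2 (h hps) hqt hpq
        · exact (hc hs).2.2.2 hps (h hqt) hpq)
  obtain ⟨⟨hSsub, hSnoE, hSfst, hSsnd⟩, hmax⟩ := hSmax
  -- the maximal S must be uncountable
  have hSunc : ¬S.Countable := by
    intro hSc
    have hfstc : (Prod.fst '' S).Countable := hSc.image _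
    have hBadL : (Prod.fst '' S ∪ ⋃ p ∈ S, {i ∈ P | E i p.2}).Countable := by
      refine hfstc.union (Set.Countable.biUnion hSc ?_)
      intro p hp
      exact hR p.2 (hSsub hp).2
    obtain ⟨j, hjP, hjBad⟩ := nonempty_of_not_countable (uncountable_diff hP hBadL)
    have hBadR : (Prod.snd '' S ∪ (⋃ p ∈ S, {i' ∈ Q | E p.1 i'}) ∪ {i' ∈ Q | E j i'}).Countable := by
      refine ((hSc.image _).union (Set.Countable.biUnion hSc ?_)).union (hL j hjP)
      intro p hp
      exact hL p.1 (hSsub hp).1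
    obtain ⟨j', hj'Q, hj'Bad⟩ := nonempty_of_not_countable (uncountable_diff hQ hBadR)
    -- now extend S, contradicting maximality
    have hnew : S ∪ {(j, j')} ∈ 𝒮 := by
      refine ⟨?_, ?_, ?_, ?_⟩
      · rintro x (hx | hx)
        · exact hSsub hx
        · rcases hx with rfl; exact ⟨hjP, hj'Q⟩
      · rintro p (hp | hp) q (hq | hq)
        · exact hSnoE p hp q hq
        · rcases hq with rfl
          intro hE
          exact hj'Bad (Or.inl (Or.inr (Set.mem_biUnion hp ⟨hj'Q, hE⟩)))
        · rcases hp with rfl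
          intro hE
          exact hjBad (Or.inr (Set.mem_biUnion hq ⟨hjP, hE⟩))
        · rcases hp with rfl; rcases hq with rfl
          intro hE
          exact hj'Bad (Or.inr ⟨hj'Q, hE⟩)
      · rintro p (hp | hp) q (hq | hq) hpq
        · exact hSfst hp hq hpq
        · rcases hq with rfl
          exact absurd ⟨p, hp, hpq⟩ (fun h => hjBad (Or.inl h))
        · rcases hp with rfl
          exact absurd ⟨q, hq, hpq.symm⟩ (fun h => hjBad (Or.inl h))
        · rcases hp with rfl; rcases hq with rfl; rfl
      · rintro p (hp | hp) q (hq | hq) hpq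
        · exact hSsnd hp hq hpq
        · rcases hq with rfl
          exact absurd ⟨p, hp, hpq⟩ (fun h => hj'Bad (Or.inl (Or.inl h)))
        · rcases hp with rfl
          exact absurd ⟨q, hq, hpq.symm⟩ (fun h => hj'Bad (Or.inl (Or.inl h)))
        · rcases hp with rfl; rcases hq with rfl; rfl
    have hsub : S ⊆ S ∪ {(j, j')} := Set.subset_union_left
    have := hmax hnew hsub
    have hjin : (j, j') ∈ S := this (Or.inr rfl)
    exact hjBad (Or.inl (Set.mem_image_of_mem Prod.fst hjin))
  -- conclude
  refine ⟨Prod.fst '' S, Prod.snd '' S, ?_, ?_, ?_, ?_, ?_⟩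
  · rintro x ⟨p, hp, rfl⟩; exact (hSsub hp).1
  · rintro x ⟨p, hp, rfl⟩; exact (hSsub hp).2
  · exact fun h => hSunc (countable_of_injOn_image hSfst h)
  · exact fun h => hSunc (countable_of_injOn_image hSsnd h)
  · rintro i ⟨p, hp, rfl⟩ i' ⟨q, hq, rfl⟩
    exact hSnoE p hp q hq


/-- Zorn extraction of an uncountable pairwise-disjoint subfamily. -/
lemma zorn_disjfam {ι α : Type*} (D : ι → Finset α) (I : Set ι) (hI : ¬I.Countable)
    (hmeet : ∀ i ∈ I, {j ∈ I | ¬Disjoint (D i) (D j)}.Countable) :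
    ∃ J ⊆ I, ¬J.Countable ∧ ∀ i ∈ J, ∀ j ∈ J, i ≠ j → Disjoint (D i) (D j) := by
  classical
  set 𝒮 : Set (Set ι) :=
    {J | J ⊆ I ∧ ∀ i ∈ J, ∀ j ∈ J, i ≠ j → Disjoint (D i) (D j)} with h𝒮
  obtain ⟨J, ⟨hJsub, hJdisj⟩, hmax⟩ := zorn_subset 𝒮 (by
    intro c hc hchain
    refine ⟨⋃₀ c, ⟨?_, ?_⟩, fun s hs => Set.subset_sUnion_of_mem hs⟩
    · rintro x ⟨s, hs, hxs⟩
      exact (hc hs).1 hxs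
    · rintro i ⟨s, hs, his⟩ j ⟨t, ht, hjt⟩ hij
      rcases eq_or_ne s t with rfl | hst
      · exact (hc hs).2 i his j hjt hij
      · rcases hchain hs ht hst with h | h
        · exact (hc ht).2 i (h his) j hjt hij
        · exact (hc hs).2 i his j (h hjt) hij)
  refine ⟨J, hJsub, ?_, hJdisj⟩
  intro hJc
  have hBad : (J ∪ ⋃ j ∈ J, {i ∈ I | ¬Disjoint (D j) (D i)}).Countable := by
    refine hJc.union (Set.Countable.biUnion hJc ?_)
    intro j hj
    have h1 := hmeet j (hJsub hj)
    exact h1.mono (by intro z hz; exact ⟨hz.1, hz.2⟩)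
  obtain ⟨i₀, hi₀I, hi₀Bad⟩ := nonempty_of_not_countable (uncountable_diff hI hBad)
  have hnew : insert i₀ J ∈ 𝒮 := by
    refine ⟨Set.insert_subset hi₀I hJsub, ?_⟩
    intro i hi j hj hij
    rcases Set.mem_insert_iff.1 hi with rfl | hiJ
    · rcases Set.mem_insert_iff.1 hj with rfl | hjJ
      · exact absurd rfl hij
      · by_contra hdis
        exact hi₀Bad (Or.inr (Set.mem_biUnion hjJ ⟨hi₀I, fun h => hdis h.symm⟩))
    · rcases Set.mem_insert_iff.1 hj with rfl | hjJ
      · by_contra hdis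
        exact hi₀Bad (Or.inr (Set.mem_biUnion hiJ ⟨hi₀I, hdis⟩))
      · exact hJdisj i hiJ j hjJ hij
  have := hmax hnew (Set.subset_insert _ _)
  exact hi₀Bad (Or.inl (this (Set.mem_insert _ _)))

/-- The `ℵ₁` Δ-system lemma (for families of finite sets of bounded size). -/
lemma delta_system {ι α : Type*} [DecidableEq α] :
    ∀ (n : ℕ) (D : ι → Finset α) (I : Set ι), ¬I.Countable → (∀ i ∈ I, (D i).card ≤ n) →
      ∃ J, J ⊆ I ∧ ¬J.Countable ∧ ∃ R : Finset α,
        ∀ i ∈ J, ∀ j ∈ J, i ≠ j → D i ∩ D j = R := by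
  intro n
  induction n with
  | zero =>
    intro D I hI hcard
    refine ⟨I, Set.Subset.rfl, hI, ∅, ?_⟩
    intro i hi j hj _
    have : D i = ∅ := Finset.card_eq_zero.1 (Nat.le_zero.1 (hcard i hi))
    simp [this]
  | succ n ih =>
    intro D I hI hcard
    by_cases hx : ∃ x : α, ¬{i ∈ I | x ∈ D i}.Countable
    · obtain ⟨x, hxunc⟩ := hx
      set I₁ := {i ∈ I | x ∈ D i} with hI₁
      obtain ⟨J, hJsub, hJunc, R', hR'⟩ := ih (fun i => (D i).erase x) I₁ hxunc (by
        intro i hi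
        have h1 : (D i).card ≤ n + 1 := hcard i hi.1
        have h2 := Finset.card_erase_of_mem hi.2
        show ((D i).erase x).card ≤ n
        omega)
      refine ⟨J, fun i hi => (hJsub hi).1, hJunc, insert x R', ?_⟩
      intro i hi j hj hij
      have hxi : x ∈ D i := (hJsub hi).2
      have hxj : x ∈ D j := (hJsub hj).2
      ext y
      simp only [Finset.mem_inter, Finset.mem_insert]
      constructor
      · rintro ⟨hyi, hyj⟩
        rcases eq_or_ne y x with rfl | hyx
        · exact Or.inl rfl
        · refine Or.inr ?_
          have hmem : y ∈ (D i).erase x ∩ (D j).erase x := by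
            simp [Finset.mem_erase, hyx, hyi, hyj]
          rwa [hR' i hi j hj hij] at hmem
      · rintro (rfl | hyR)
        · exact ⟨hxi, hxj⟩
        · have hmem : y ∈ (D i).erase x ∩ (D j).erase x := by
            rw [hR' i hi j hj hij]; exact hyR
          simp only [Finset.mem_inter, Finset.mem_erase] at hmem
          exact ⟨hmem.1.2, hmem.2.2⟩
    · push_neg at hx
      obtain ⟨J, hJsub, hJunc, hJdisj⟩ := zorn_disjfam D I hI (by
        intro i _
        have hsub : {j ∈ I | ¬Disjoint (D i) (D j)} ⊆ ⋃ x ∈ (D i : Set α), {j ∈ I | x ∈ D j} := by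
          rintro j ⟨hjI, hnd⟩
          rw [Finset.not_disjoint_iff] at hnd
          obtain ⟨x, hxi, hxj⟩ := hnd
          exact Set.mem_biUnion (Finset.mem_coe.2 hxi) ⟨hjI, hxj⟩
        exact Set.Countable.mono hsub
          (Set.Countable.biUnion (D i).countable_toSet (fun x _ => hx x)))
      refine ⟨J, hJsub, hJunc, ∅, ?_⟩
      intro i hi j hj hij
      exact Finset.disjoint_iff_inter_eq_empty.1 (hJdisj i hi j hj hij)


lemma uncount_sep {ι : Type*} {S : Set ι} {P : ι → Prop} (hS : ¬S.Countable)
    (h : (S \ {i ∈ S | P i}).Countable) : ¬{i ∈ S | P i}.Countable := fun hc =>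
  hS ((h.union hc).mono (fun x hx => (em (P x)).elim (fun hp => Or.inr ⟨hx, hp⟩)
    (fun hp => Or.inl ⟨hx, fun hm => hp hm.2⟩)))

section Tree

variable {T : Type*} [PartialOrder T] {ι : Type*}

lemma countable_Iic (hct : ∀ t : T, (Set.Iio t).Countable) (c : T) :
    (Set.Iic c).Countable := by
  rw [← Set.Iio_union_right]
  exact (hct c).union (Set.countable_singleton c)

/-- Somewhere-comparability of two finite sets. -/
def SomeComp (s t : Finset T) : Prop := ∃ a ∈ s, ∃ b ∈ t, a < b ∨ b < a

lemma someComp_symm {s t : Finset T} (h : SomeComp s t) : SomeComp t s := by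
  obtain ⟨a, ha, b, hb, hab⟩ := h
  exact ⟨b, hb, a, ha, hab.symm⟩

/-- Indices in `J` whose set contains an element strictly above `c`. -/
def MtS (F : ι → Finset T) (J : Set ι) (c : T) : Set ι := {i ∈ J | ∃ x ∈ F i, c < x}

end Tree


section Tree2

variable {T : Type*} [PartialOrder T] {ι : Type*}

/-- The upgrade step: if uncountably many sets on the right meet the cone above `c`,
then all but countably many sets on the left meet it as well (else we could apply the
induction hypothesis to the family with the cone above `c` removed). -/
lemma upgrade
    (hIio : ∀ b : T, IsChain (· ≤ ·) (Set.Iio b))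
    (hct : ∀ t : T, (Set.Iio t).Countable)
    {k : ℕ}
    (ih : ∀ (F : ι → Finset T) (I I' : Set ι),
        (∀ i ∈ I ∪ I', ∀ j ∈ I ∪ I', i ≠ j → Disjoint (F i) (F j)) →
        ¬I.Countable → ¬I'.Countable →
        ∀ n m : ℕ, (∀ i ∈ I, (F i).card ≤ n) → (∀ i ∈ I', (F i).card ≤ m) → n + m ≤ k →
        (∀ i ∈ I, ∀ i' ∈ I', i ≠ i' → SomeComp (F i) (F i')) → False)
    (F : ι → Finset T) (I I' : Set ι)
    (hdisj : ∀ i ∈ I ∪ I', ∀ j ∈ I ∪ I', i ≠ j → Disjoint (F i) (F j))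
    (hI : ¬I.Countable)
    {n m : ℕ} (hn : ∀ i ∈ I, (F i).card ≤ n) (hm : ∀ i ∈ I', (F i).card ≤ m)
    (hk : n + m ≤ k + 1)
    (hcomp : ∀ i ∈ I, ∀ i' ∈ I', i ≠ i' → SomeComp (F i) (F i'))
    (c : T) (hY : ¬(MtS F I' c).Countable) :
    (I \ MtS F I c).Countable := by
  classical
  by_contra hZ
  have hdisjI : ∀ i ∈ I, ∀ j ∈ I, i ≠ j → Disjoint (F i) (F j) :=
    fun i hi j hj => hdisj i (Or.inl hi) j (Or.inl hj)
  set Z₁ : Set ι := (I \ MtS F I c) \ {i ∈ I | ∃ x ∈ F i, x ∈ Set.Iic c} with hZ₁def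
  have hZ₁ : ¬Z₁.Countable :=
    uncountable_diff hZ (meet_countable F I hdisjI (countable_Iic hct c))
  set G : ι → Finset T := fun j => (F j).filter (fun x => ¬ c < x) with hGdef
  -- m ≥ 1
  obtain ⟨iw, hiwI', xw, hxwF, -⟩ := nonempty_of_not_countable hY
  have hm1 : 1 ≤ m := le_trans (Finset.card_pos.2 ⟨xw, hxwF⟩) (hm iw hiwI')
  refine ih G Z₁ (MtS F I' c) ?_ hZ₁ hY n (m - 1) ?_ ?_ (by omega) ?_
  · intro i hi j hj hne
    have hi2 : i ∈ I ∪ I' := by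
      rcases hi with h | h
      · exact Or.inl h.1.1
      · exact Or.inr h.1
    have hj2 : j ∈ I ∪ I' := by
      rcases hj with h | h
      · exact Or.inl h.1.1
      · exact Or.inr h.1
    exact (hdisj i hi2 j hj2 hne).mono (Finset.filter_subset _ _) (Finset.filter_subset _ _)
  · intro i hi
    exact le_trans (Finset.card_filter_le _ _) (hn i hi.1.1)
  · intro i' hi'
    obtain ⟨hi'I', x, hxF, hcx⟩ := hi'
    have hxG : x ∉ G i' := by
      intro hx
      exact (Finset.mem_filter.1 hx).2 hcx
    have hsub : G i' ⊆ (F i').erase x := by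
      intro y hy
      have hyF : y ∈ F i' := Finset.filter_subset _ _ hy
      refine Finset.mem_erase.2 ⟨?_, hyF⟩
      rintro rfl
      exact hxG hy
    have h1 := Finset.card_le_card hsub
    have h2 := Finset.card_erase_of_mem hxF
    have h3 := hm i' hi'I'
    omega
  · rintro i hi i' hi' hne
    obtain ⟨e, he, f, hf, hcmp⟩ := hcomp i hi.1.1 i' hi'.1 hne
    have hiNoCone : ∀ x ∈ F i, ¬ c < x := by
      intro x hx hcx
      exact hi.1.2 ⟨hi.1.1, x, hx, hcx⟩
    have hiNoIic : ∀ x ∈ F i, ¬ x ≤ c := by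
      intro x hx hxc
      exact hi.2 ⟨hi.1.1, x, hx, hxc⟩
    have hfG : ¬ c < f := by
      intro hcf
      rcases hcmp with hef | hfe
      · -- e < f, both e and c below f, so comparable
        rcases eq_or_ne e c with rfl | henec
        · exact hiNoIic e he le_rfl
        · rcases hIio f hef hcf henec with h | h
          · exact hiNoIic e he h
          · exact hiNoCone e he (lt_of_le_of_ne h (Ne.symm henec))
      · exact hiNoCone e he (lt_trans hcf hfe)
    exact ⟨e, Finset.mem_filter.2 ⟨he, hiNoCone e he⟩, f, Finset.mem_filter.2 ⟨hf, hfG⟩, hcmp⟩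

end Tree2


section Tree3

variable {T : Type*} [PartialOrder T] {ι : Type*}

/-- The key lemma: in a tree with no uncountable chains, there is no pair of uncountable
families of pairwise disjoint finite sets which are pairwise somewhere-comparable. -/
theorem KL2
    (hIio : ∀ b : T, IsChain (· ≤ ·) (Set.Iio b))
    (hct : ∀ t : T, (Set.Iio t).Countable)
    (hnc : ∀ C : Set T, IsChain (· ≤ ·) C → C.Countable) :
    ∀ (k : ℕ) (F : ι → Finset T) (I I' : Set ι),
      (∀ i ∈ I ∪ I', ∀ j ∈ I ∪ I', i ≠ j → Disjoint (F i) (F j)) →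
      ¬I.Countable → ¬I'.Countable →
      ∀ n m : ℕ, (∀ i ∈ I, (F i).card ≤ n) → (∀ i ∈ I', (F i).card ≤ m) → n + m ≤ k →
      (∀ i ∈ I, ∀ i' ∈ I', i ≠ i' → SomeComp (F i) (F i')) → False := by
  intro k
  induction k with
  | zero =>
    intro F I I' hdisj hI hI' n m hn hm hk hcomp
    obtain ⟨i, hiI⟩ := nonempty_of_not_countable hI
    obtain ⟨i', hi'I', hi'ne⟩ :=
      nonempty_of_not_countable (uncountable_diff hI' (Set.countable_singleton i))
    obtain ⟨a, ha, -⟩ := hcomp i hiI i' hi'I' (fun h => hi'ne (h ▸ rfl))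
    have : (F i).card = 0 := Nat.le_zero.1 (le_trans (hn i hiI) (by omega))
    rw [Finset.card_eq_zero.1 this] at ha
    exact absurd ha (Finset.notMem_empty a)
  | succ k ih =>
    intro F I I' hdisj hI hI' n m hn hm hk hcomp
    classical
    have hdisjI : ∀ i ∈ I, ∀ j ∈ I, i ≠ j → Disjoint (F i) (F j) :=
      fun i hi j hj => hdisj i (Or.inl hi) j (Or.inl hj)
    have hdisjI' : ∀ i ∈ I', ∀ j ∈ I', i ≠ j → Disjoint (F i) (F j) :=
      fun i hi j hj => hdisj i (Or.inr hi) j (Or.inr hj)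
    have hdisj' : ∀ i ∈ I' ∪ I, ∀ j ∈ I' ∪ I, i ≠ j → Disjoint (F i) (F j) := by
      intro i hi j hj hne
      refine hdisj i ?_ j ?_ hne
      · rcases hi with h | h
        exacts [Or.inr h, Or.inl h]
      · rcases hj with h | h
        exacts [Or.inr h, Or.inl h]
    have hcomp' : ∀ i' ∈ I', ∀ i ∈ I, i' ≠ i → SomeComp (F i') (F i) :=
      fun i' hi' i hi hne => someComp_symm (hcomp i hi i' hi' hne.symm)
    have upL : ∀ c : T, ¬(MtS F I' c).Countable → (I \ MtS F I c).Countable :=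
      fun c hY => upgrade hIio hct ih F I I' hdisj hI hn hm hk hcomp c hY
    have upR : ∀ c : T, ¬(MtS F I c).Countable → (I' \ MtS F I' c).Countable :=
      fun c hY => upgrade hIio hct ih F I' I hdisj' hI' hm hn (by omega) hcomp' c hY
    have compl_unc : ∀ (J : Set ι) (c : T), ¬J.Countable →
        (J \ MtS F J c).Countable → ¬(MtS F J c).Countable := by
      intro J c hJ h1 hc
      exact hJ ((h1.union hc).mono (fun i hi => (em (i ∈ MtS F J c)).elim Or.inr
        (fun h => Or.inl ⟨hi, h⟩)))
    have strongifyL : ∀ c : T, ¬(MtS F I' c).Countable →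
        (I \ MtS F I c).Countable ∧ (I' \ MtS F I' c).Countable := by
      intro c hY
      have h1 := upL c hY
      exact ⟨h1, upR c (compl_unc I c hI h1)⟩
    have strongifyR : ∀ c : T, ¬(MtS F I c).Countable →
        (I \ MtS F I c).Countable ∧ (I' \ MtS F I' c).Countable := by
      intro c hY
      have h1 := upR c hY
      exact ⟨upL c (compl_unc I' c hI' h1), h1⟩
    set St : Set T := {c | (I \ MtS F I c).Countable ∧ (I' \ MtS F I' c).Countable}
      with hStdef
    -- nonempty finite sets
    have hIe : {i ∈ I | F i = ∅}.Countable := by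
      by_contra h
      obtain ⟨i, hiI, hiFe⟩ := nonempty_of_not_countable h
      obtain ⟨i', hi'I', hi'ne⟩ :=
        nonempty_of_not_countable (uncountable_diff hI' (Set.countable_singleton i))
      obtain ⟨a, ha, -⟩ := hcomp i hiI i' hi'I' (fun h' => hi'ne (h' ▸ rfl))
      rw [hiFe] at ha
      exact absurd ha (Finset.notMem_empty a)
    have hI'e : {i ∈ I' | F i = ∅}.Countable := by
      by_contra h
      obtain ⟨i', hi'I', hi'Fe⟩ := nonempty_of_not_countable h
      obtain ⟨i, hiI, hine⟩ :=
        nonempty_of_not_countable (uncountable_diff hI (Set.countable_singleton i'))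
      obtain ⟨a, -, b, hb, -⟩ := hcomp i hiI i' hi'I' (fun h' => hine (h'.symm ▸ rfl))
      rw [hi'Fe] at hb
      exact absurd hb (Finset.notMem_empty b)
    -- the continuation lemma
    have cont : ∀ M : Set T, M ⊆ St → IsChain (· ≤ ·) M → ∃ c ∈ St, ∀ d ∈ M, d < c := by
      intro M hMSt hMch
      have hMct : M.Countable := hnc M hMch
      set UpM : Set T := {t | ∀ d ∈ M, d < t} with hUpMdef
      -- all but countably many left sets meet UpM
      have hI2c : (I \ {i ∈ I | ∃ x ∈ F i, x ∈ UpM}).Countable := by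
        refine Set.Countable.mono ?_
          (hIe.union (Set.Countable.biUnion hMct (fun d hd => (hMSt hd).1)))
        rintro i ⟨hiI, hi2⟩
        by_cases hFe : F i = ∅
        · exact Or.inl ⟨hiI, hFe⟩
        · by_cases hall : ∀ d ∈ M, i ∈ MtS F I d
          · exfalso
            obtain ⟨x, hx, hxall⟩ := cof_pigeon hMch (F i)
              (Finset.nonempty_iff_ne_empty.2 hFe)
              (fun d hd => (hall d hd).2)
            exact hi2 ⟨hiI, x, hx, hxall⟩
          · push_neg at hall
            obtain ⟨d, hd, hnd⟩ := hall
            exact Or.inr (Set.mem_biUnion hd ⟨hiI, hnd⟩)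
      have hI'2c : (I' \ {i ∈ I' | ∃ x ∈ F i, x ∈ UpM}).Countable := by
        refine Set.Countable.mono ?_
          (hI'e.union (Set.Countable.biUnion hMct (fun d hd => (hMSt hd).2)))
        rintro i ⟨hiI, hi2⟩
        by_cases hFe : F i = ∅
        · exact Or.inl ⟨hiI, hFe⟩
        · by_cases hall : ∀ d ∈ M, i ∈ MtS F I' d
          · exfalso
            obtain ⟨x, hx, hxall⟩ := cof_pigeon hMch (F i)
              (Finset.nonempty_iff_ne_empty.2 hFe)
              (fun d hd => (hall d hd).2)
            exact hi2 ⟨hiI, x, hx, hxall⟩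
          · push_neg at hall
            obtain ⟨d, hd, hnd⟩ := hall
            exact Or.inr (Set.mem_biUnion hd ⟨hiI, hnd⟩)
      have hI2 : ¬{i ∈ I | ∃ x ∈ F i, x ∈ UpM}.Countable := uncount_sep hI hI2c
      have hI'2 : ¬{i ∈ I' | ∃ x ∈ F i, x ∈ UpM}.Countable := uncount_sep hI' hI'2c
      set AIic : Set T := ⋃ d ∈ M, Set.Iic d with hAIicdef
      have hAIic : AIic.Countable :=
        Set.Countable.biUnion hMct (fun d _ => countable_Iic hct d)
      set I₃ : Set ι := {i ∈ I | ∃ x ∈ F i, x ∈ UpM} \ {i ∈ I | ∃ x ∈ F i, x ∈ AIic}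
        with hI₃def
      set I'₃ : Set ι := {i ∈ I' | ∃ x ∈ F i, x ∈ UpM} \ {i ∈ I' | ∃ x ∈ F i, x ∈ AIic}
        with hI'₃def
      have hI₃ : ¬I₃.Countable :=
        uncountable_diff hI2 ((meet_countable F I hdisjI hAIic).mono
          (by intro z hz; exact hz))
      have hI'₃ : ¬I'₃.Countable :=
        uncountable_diff hI'2 ((meet_countable F I' hdisjI' hAIic).mono
          (by intro z hz; exact hz))
      have hI₃I : I₃ ⊆ I := fun i hi => hi.1.1
      have hI'₃I' : I'₃ ⊆ I' := fun i hi => hi.1.1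
      set B : ι → Finset T := fun j => (F j).filter (fun x => x ∈ UpM) with hBdef
      set E : ι → ι → Prop := fun i i' => i ≠ i' ∧ SomeComp (B i) (B i') with hEdef
      -- a helper that turns a big edge-degree at one vertex into a strong element
      have findb : ∀ (K : Set ι), K ⊆ I' → ∀ (i : ι) (s : Finset T), (↑s ⊆ UpM) →
          ¬{i' ∈ K | i ≠ i' ∧ SomeComp s (B i')}.Countable →
          ∃ b ∈ UpM, ¬(MtS F I' b).Countable := by
        intro K hKI' i s hsUp hbig
        have hcover : {i' ∈ K | i ≠ i' ∧ SomeComp s (B i')} ⊆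
            ⋃ b ∈ (s : Set T), {i' ∈ K | ∃ f ∈ B i', b < f ∨ f < b} := by
          rintro i' ⟨hi'K, -, a, ha, f, hf, hcmp⟩
          exact Set.mem_biUnion (Finset.mem_coe.2 ha) ⟨hi'K, f, hf, hcmp⟩
        have hex : ∃ b ∈ s, ¬{i' ∈ K | ∃ f ∈ B i', b < f ∨ f < b}.Countable := by
          by_contra hall
          push_neg at hall
          exact hbig ((Set.Countable.biUnion s.countable_toSet
            (fun b hb => hall b (Finset.mem_coe.1 hb))).mono hcover)
        obtain ⟨b, hbs, hbunc⟩ := hex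
        refine ⟨b, hsUp (Finset.mem_coe.2 hbs), ?_⟩
        have hmeetc := meet_countable F I' hdisjI' (countable_Iic hct b)
        have hKsub : ({i' ∈ K | ∃ f ∈ B i', b < f ∨ f < b} \
            {i' ∈ I' | ∃ x ∈ F i', x ∈ Set.Iic b}) ⊆ MtS F I' b := by
          rintro i' ⟨⟨hi'K, f, hf, hcmp⟩, hnot⟩
          have hfF : f ∈ F i' := Finset.filter_subset _ _ hf
          have hi'I' : i' ∈ I' := hKI' hi'K
          rcases hcmp with h | h
          · exact ⟨hi'I', f, hfF, h⟩
          · exact absurd ⟨hi'I', f, hfF, le_of_lt h⟩ hnot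
        intro hc
        exact (uncountable_diff hbunc hmeetc) (hc.mono hKsub)
      have findb' : ∀ (K : Set ι), K ⊆ I → ∀ (i : ι) (s : Finset T), (↑s ⊆ UpM) →
          ¬{i'' ∈ K | i ≠ i'' ∧ SomeComp s (B i'')}.Countable →
          ∃ b ∈ UpM, ¬(MtS F I b).Countable := by
        intro K hKI i s hsUp hbig
        have hcover : {i'' ∈ K | i ≠ i'' ∧ SomeComp s (B i'')} ⊆
            ⋃ b ∈ (s : Set T), {i'' ∈ K | ∃ f ∈ B i'', b < f ∨ f < b} := by
          rintro i' ⟨hi'K, -, a, ha, f, hf, hcmp⟩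
          exact Set.mem_biUnion (Finset.mem_coe.2 ha) ⟨hi'K, f, hf, hcmp⟩
        have hex : ∃ b ∈ s, ¬{i'' ∈ K | ∃ f ∈ B i'', b < f ∨ f < b}.Countable := by
          by_contra hall
          push_neg at hall
          exact hbig ((Set.Countable.biUnion s.countable_toSet
            (fun b hb => hall b (Finset.mem_coe.1 hb))).mono hcover)
        obtain ⟨b, hbs, hbunc⟩ := hex
        refine ⟨b, hsUp (Finset.mem_coe.2 hbs), ?_⟩
        have hmeetc := meet_countable F I hdisjI (countable_Iic hct b)
        have hKsub : ({i'' ∈ K | ∃ f ∈ B i'', b < f ∨ f < b} \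
            {i'' ∈ I | ∃ x ∈ F i'', x ∈ Set.Iic b}) ⊆ MtS F I b := by
          rintro i' ⟨⟨hi'K, f, hf, hcmp⟩, hnot⟩
          have hfF : f ∈ F i' := Finset.filter_subset _ _ hf
          have hi'I : i' ∈ I := hKI hi'K
          rcases hcmp with h | h
          · exact ⟨hi'I, f, hfF, h⟩
          · exact absurd ⟨hi'I, f, hfF, le_of_lt h⟩ hnot
        intro hc
        exact (uncountable_diff hbunc hmeetc) (hc.mono hKsub)
      by_cases hcaseL : ∃ i ∈ I₃, ¬{i' ∈ I'₃ | E i i'}.Countable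
      · obtain ⟨i, hiI₃, hbig⟩ := hcaseL
        obtain ⟨b, hbUp, hbunc⟩ := findb I'₃ hI'₃I' i (B i)
          (by intro x hx; exact (Finset.mem_filter.1 (Finset.mem_coe.1 hx)).2) hbig
        obtain ⟨h1, h2⟩ := strongifyL b hbunc
        exact ⟨b, ⟨h1, h2⟩, hbUp⟩
      · by_cases hcaseR : ∃ i' ∈ I'₃, ¬{i'' ∈ I₃ | i' ≠ i'' ∧ SomeComp (B i') (B i'')}.Countable
        · obtain ⟨i', hi'I'₃, hbig⟩ := hcaseR
          obtain ⟨b, hbUp, hbunc⟩ := findb' I₃ hI₃I i' (B i')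
            (by intro x hx; exact (Finset.mem_filter.1 (Finset.mem_coe.1 hx)).2) hbig
          obtain ⟨h1, h2⟩ := strongifyR b hbunc
          exact ⟨b, ⟨h1, h2⟩, hbUp⟩
        · push_neg at hcaseL hcaseR
          have hdegL : ∀ i ∈ I₃, {i' ∈ I'₃ | E i i'}.Countable := by
            intro i hi
            by_contra h
            exact absurd h (not_not.2 (hcaseL i hi))
          have hdegR : ∀ i' ∈ I'₃, {i ∈ I₃ | E i i'}.Countable := by
            intro i' hi'
            have h := hcaseR i' hi'
            refine Set.Countable.mono ?_ h
            rintro i ⟨hiI₃, hne, hsc⟩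
            exact ⟨hiI₃, hne.symm, someComp_symm hsc⟩
          obtain ⟨A, A', hAsub, hA'sub, hAunc, hA'unc, hnoE⟩ :=
            zorn_indep_rect hI₃ hI'₃ E hdegL hdegR
          set G : ι → Finset T := fun j => (F j).filter (fun x => x ∉ UpM) with hGdef
          exfalso
          -- n, m ≥ 1
          obtain ⟨ia, hiaA⟩ := nonempty_of_not_countable hAunc
          obtain ⟨xa, hxa, -⟩ := (hAsub hiaA).1.2
          have hn1 : 1 ≤ n := le_trans (Finset.card_pos.2 ⟨xa, hxa⟩)
            (hn ia (hI₃I (hAsub hiaA)))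
          obtain ⟨ib, hibA'⟩ := nonempty_of_not_countable hA'unc
          obtain ⟨xb, hxb, -⟩ := (hA'sub hibA').1.2
          have hm1 : 1 ≤ m := le_trans (Finset.card_pos.2 ⟨xb, hxb⟩)
            (hm ib (hI'₃I' (hA'sub hibA')))
          refine ih G A A' ?_ hAunc hA'unc (n - 1) (m - 1) ?_ ?_ (by omega) ?_
          · intro i hi j hj hne
            have hi2 : i ∈ I ∪ I' := by
              rcases hi with h | h
              · exact Or.inl (hI₃I (hAsub h))
              · exact Or.inr (hI'₃I' (hA'sub h))
            have hj2 : j ∈ I ∪ I' := by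
              rcases hj with h | h
              · exact Or.inl (hI₃I (hAsub h))
              · exact Or.inr (hI'₃I' (hA'sub h))
            exact (hdisj i hi2 j hj2 hne).mono (Finset.filter_subset _ _)
              (Finset.filter_subset _ _)
          · intro i hi
            obtain ⟨x, hx, hxUp⟩ := (hAsub hi).1.2
            have hxG : x ∉ G i := fun h => (Finset.mem_filter.1 h).2 hxUp
            have hsub : G i ⊆ (F i).erase x := by
              intro y hy
              refine Finset.mem_erase.2 ⟨?_, Finset.filter_subset _ _ hy⟩
              rintro rfl
              exact hxG hy
            have h1 := Finset.card_le_card hsub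
            have h2 := Finset.card_erase_of_mem hx
            have h3 := hn i (hI₃I (hAsub hi))
            omega
          · intro i hi
            obtain ⟨x, hx, hxUp⟩ := (hA'sub hi).1.2
            have hxG : x ∉ G i := fun h => (Finset.mem_filter.1 h).2 hxUp
            have hsub : G i ⊆ (F i).erase x := by
              intro y hy
              refine Finset.mem_erase.2 ⟨?_, Finset.filter_subset _ _ hy⟩
              rintro rfl
              exact hxG hy
            have h1 := Finset.card_le_card hsub
            have h2 := Finset.card_erase_of_mem hx
            have h3 := hm i (hI'₃I' (hA'sub hi))
            omega
          · intro i hiA i' hi'A' hne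
            obtain ⟨e, he, f, hf, hcmp⟩ := hcomp i (hI₃I (hAsub hiA)) i'
              (hI'₃I' (hA'sub hi'A')) hne
            have hiNoIic : ∀ x ∈ F i, x ∉ AIic := by
              intro x hx hxA
              exact (hAsub hiA).2 ⟨hI₃I (hAsub hiA), x, hx, hxA⟩
            have hi'NoIic : ∀ x ∈ F i', x ∉ AIic := by
              intro x hx hxA
              exact (hA'sub hi'A').2 ⟨hI'₃I' (hA'sub hi'A'), x, hx, hxA⟩
            have claim1 : e ∈ UpM → f ∈ UpM := by
              intro heU d hd
              have hde : d < e := heU d hd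
              rcases hcmp with hef | hfe
              · exact lt_trans hde hef
              · rcases eq_or_ne f d with rfl | hfd
                · exact absurd (show f ∈ AIic from by
                    rw [hAIicdef]; exact Set.mem_biUnion hd (Set.mem_Iic.2 le_rfl))
                    (hi'NoIic f hf)
                · rcases hIio e hfe hde hfd with h | h
                  · exact absurd (show f ∈ AIic from by
                      rw [hAIicdef]; exact Set.mem_biUnion hd (Set.mem_Iic.2 h))
                      (hi'NoIic f hf)
                  · exact lt_of_le_of_ne h (Ne.symm hfd)
            have claim2 : f ∈ UpM → e ∈ UpM := by
              intro hfU d hd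
              have hdf : d < f := hfU d hd
              rcases hcmp with hef | hfe
              · rcases eq_or_ne e d with rfl | hed
                · exact absurd (show e ∈ AIic from by
                    rw [hAIicdef]; exact Set.mem_biUnion hd (Set.mem_Iic.2 le_rfl))
                    (hiNoIic e he)
                · rcases hIio f hef hdf hed with h | h
                  · exact absurd (show e ∈ AIic from by
                      rw [hAIicdef]; exact Set.mem_biUnion hd (Set.mem_Iic.2 h))
                      (hiNoIic e he)
                  · exact lt_of_le_of_ne h (Ne.symm hed)
              · exact lt_trans hdf hfe
            by_cases heU : e ∈ UpM
            · have hfU := claim1 heU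
              exact absurd ⟨hne, e, Finset.mem_filter.2 ⟨he, heU⟩, f,
                Finset.mem_filter.2 ⟨hf, hfU⟩, hcmp⟩ (hnoE i hiA i' hi'A')
            · have hfU : f ∉ UpM := fun h => heU (claim2 h)
              exact ⟨e, Finset.mem_filter.2 ⟨he, heU⟩, f,
                Finset.mem_filter.2 ⟨hf, hfU⟩, hcmp⟩
    -- Zorn on chains of strong elements
    obtain ⟨M, ⟨hMSt, hMch⟩, hmax⟩ := zorn_subset
      {M : Set T | M ⊆ St ∧ IsChain (· ≤ ·) M} (by
        intro c hc hchain
        refine ⟨⋃₀ c, ⟨?_, ?_⟩, fun s hs => Set.subset_sUnion_of_mem hs⟩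
        · rintro x ⟨s, hs, hxs⟩
          exact (hc hs).1 hxs
        · rintro x ⟨s, hs, hxs⟩ y ⟨t, ht, hyt⟩ hxy
          rcases eq_or_ne s t with rfl | hst
          · exact (hc hs).2 hxs hyt hxy
          · rcases hchain hs ht hst with h | h
            · exact (hc ht).2 (h hxs) hyt hxy
            · exact (hc hs).2 hxs (h hyt) hxy)
    obtain ⟨c, hcSt, hcabove⟩ := cont M hMSt hMch
    have hcM : c ∉ M := fun h => lt_irrefl c (hcabove c h)
    have hnew : insert c M ∈ {M : Set T | M ⊆ St ∧ IsChain (· ≤ ·) M} := by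
      refine ⟨Set.insert_subset hcSt hMSt, ?_⟩
      intro x hx y hy hxy
      rcases Set.mem_insert_iff.1 hx with rfl | hxM
      · rcases Set.mem_insert_iff.1 hy with rfl | hyM
        · exact absurd rfl hxy
        · exact Or.inr (le_of_lt (hcabove y hyM))
      · rcases Set.mem_insert_iff.1 hy with rfl | hyM
        · exact Or.inl (le_of_lt (hcabove x hxM))
        · exact hMch hxM hyM hxy
    have := hmax hnew (Set.subset_insert _ _)
    exact hcM (this (Set.mem_insert _ _))

end Tree3


section Main

variable {T : Type*} [PartialOrder T]

lemma hard
    (hIio : ∀ b : T, IsChain (· ≤ ·) (Set.Iio b))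
    (hct : ∀ t : T, (Set.Iio t).Countable)
    (hnc : ∀ C : Set T, IsChain (· ≤ ·) C → C.Countable)
    (A : Set (SpecPoset T))
    (hanti : ∀ p ∈ A, ∀ q ∈ A, p ≠ q → ¬∃ r, r ≤ p ∧ r ≤ q) :
    A.Countable := by
  classical
  by_contra hA
  set Dfin : SpecPoset T → Finset T := fun p => p.2.1.toFinset with hDdef
  have hmemD : ∀ (p : SpecPoset T) (t : T), t ∈ Dfin p ↔ p.1 t ≠ none :=
    fun p t => p.2.1.mem_toFinset
  have hex : ∃ n : ℕ, ¬{p ∈ A | (Dfin p).card = n}.Countable := by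
    by_contra hall
    push_neg at hall
    refine hA ((Set.countable_iUnion hall).mono ?_)
    intro p hp
    exact Set.mem_iUnion.2 ⟨(Dfin p).card, ⟨hp, rfl⟩⟩
  obtain ⟨n, hA₁⟩ := hex
  obtain ⟨J, hJsub, hJunc, R, hR⟩ := delta_system n Dfin _ hA₁ (fun p hp => le_of_eq hp.2)
  set res : SpecPoset T → ({x // x ∈ R} → Option ℕ) := fun p x => p.1 x.1 with hresdef
  have hex2 : ∃ v, ¬{p ∈ J | res p = v}.Countable := by
    by_contra hall
    push_neg at hall
    refine hJunc ((Set.countable_iUnion hall).mono ?_)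
    intro p hp
    exact Set.mem_iUnion.2 ⟨res p, ⟨hp, rfl⟩⟩
  obtain ⟨v, hA₂⟩ := hex2
  set A₂ : Set (SpecPoset T) := {p ∈ J | res p = v} with hA₂def
  have hA₂J : A₂ ⊆ J := fun p hp => hp.1
  have hRint : ∀ p ∈ A₂, ∀ q ∈ A₂, p ≠ q → Dfin p ∩ Dfin q = R :=
    fun p hp q hq => hR p (hA₂J hp) q (hA₂J hq)
  have hagree : ∀ p ∈ A₂, ∀ q ∈ A₂, ∀ t ∈ R, p.1 t = q.1 t := by
    intro p hp q hq t ht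
    have h := hp.2.trans hq.2.symm
    exact congrFun h ⟨t, ht⟩
  set Fam : SpecPoset T → Finset T := fun p => Dfin p \ R with hFamdef
  have hdisj : ∀ p ∈ A₂, ∀ q ∈ A₂, p ≠ q → Disjoint (Fam p) (Fam q) := by
    intro p hp q hq hne
    rw [Finset.disjoint_left]
    intro x hxp hxq
    have hxi : x ∈ Dfin p ∩ Dfin q := Finset.mem_inter.2
      ⟨(Finset.mem_sdiff.1 hxp).1, (Finset.mem_sdiff.1 hxq).1⟩
    rw [hRint p hp q hq hne] at hxi
    exact (Finset.mem_sdiff.1 hxp).2 hxi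
  have hcomp : ∀ p ∈ A₂, ∀ q ∈ A₂, p ≠ q → SomeComp (Fam p) (Fam q) := by
    intro p hp q hq hne
    by_contra hsc
    apply hanti p (hJsub (hA₂J hp)).1 q (hJsub (hA₂J hq)).1 hne
    have hRsub : R ⊆ Dfin p ∩ Dfin q := by rw [hRint p hp q hq hne]
    have hRp : ∀ t ∈ R, t ∈ Dfin p := fun t ht => (Finset.mem_inter.1 (hRsub ht)).1
    set rf : T → Option ℕ := fun t => (p.1 t).elim (q.1 t) some with hrfdef
    have hrfp : ∀ t w, p.1 t = some w → rf t = some w := by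
      intro t w h
      simp [hrfdef, h]
    have hrfn : ∀ t, p.1 t = none → rf t = q.1 t := by
      intro t h
      simp [hrfdef, h]
    have hfin : {t | rf t ≠ none}.Finite := by
      refine Set.Finite.subset (p.2.1.union q.2.1) ?_
      intro t ht
      have ht' : rf t ≠ none := ht
      by_cases hp1 : p.1 t = none
      · exact Or.inr (show ¬((q.1 : T → Option ℕ) t = none) from hrfn t hp1 ▸ ht')
      · exact Or.inl hp1
    have hval : ∀ a b : T, a < b → ∀ w : ℕ, rf a = some w → rf b ≠ some w := by
      intro a b hab w ha hb
      by_cases hpa : p.1 a = none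
      · have hqa : q.1 a = some w := by rw [hrfn a hpa] at ha; exact ha
        by_cases hpb : p.1 b = none
        · have hqb : q.1 b = some w := by rw [hrfn b hpb] at hb; exact hb
          exact q.2.2 a b hab w hqa hqb
        · obtain ⟨u, hu⟩ := Option.ne_none_iff_exists'.1 hpb
          have hpb' : p.1 b = some w := by
            rw [hu]
            exact (hrfp b u hu).symm.trans hb
          by_cases hbR : b ∈ R
          · exact q.2.2 a b hab w hqa
              (by rw [← hagree p hp q hq b hbR]; exact hpb')
          · have haDq : a ∈ Dfin q := (hmemD q a).2 (by rw [hqa]; exact Option.some_ne_none w)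
            have haR : a ∉ R := fun h => ((hmemD p a).1 (hRp a h)) hpa
            exact hsc ⟨b, Finset.mem_sdiff.2 ⟨(hmemD p b).2 hpb, hbR⟩, a,
              Finset.mem_sdiff.2 ⟨haDq, haR⟩, Or.inr hab⟩
      · obtain ⟨u, hu⟩ := Option.ne_none_iff_exists'.1 hpa
        have hpa' : p.1 a = some w := by
          rw [hu]
          exact (hrfp a u hu).symm.trans ha
        by_cases hpb : p.1 b = none
        · have hqb : q.1 b = some w := by rw [hrfn b hpb] at hb; exact hb
          by_cases haR : a ∈ R
          · exact q.2.2 a b hab w (by rw [← hagree p hp q hq a haR]; exact hpa') hqb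
          · have hbDq : b ∈ Dfin q := (hmemD q b).2 (by rw [hqb]; exact Option.some_ne_none w)
            have hbR : b ∉ R := fun h => ((hmemD p b).1 (hRp b h)) hpb
            exact hsc ⟨a, Finset.mem_sdiff.2 ⟨(hmemD p a).2 hpa, haR⟩, b,
              Finset.mem_sdiff.2 ⟨hbDq, hbR⟩, Or.inl hab⟩
        · obtain ⟨u', hu'⟩ := Option.ne_none_iff_exists'.1 hpb
          have hpb' : p.1 b = some w := by
            rw [hu']
            exact (hrfp b u' hu').symm.trans hb
          exact p.2.2 a b hab w hpa' hpb'
    refine ⟨⟨rf, hfin, hval⟩, ?_, ?_⟩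
    · intro t w h
      exact hrfp t w h
    · intro t w h
      by_cases hpt : p.1 t = none
      · show rf t = some w
        rw [hrfn t hpt]
        exact h
      · have htp : t ∈ Dfin p := (hmemD p t).2 hpt
        have htq : t ∈ Dfin q := (hmemD q t).2 (by rw [h]; exact Option.some_ne_none w)
        have htR : t ∈ R := by
          rw [← hRint p hp q hq hne]
          exact Finset.mem_inter.2 ⟨htp, htq⟩
        exact hrfp t w ((hagree p hp q hq t htR).trans h)
  refine KL2 hIio hct hnc (n + n) Fam A₂ A₂ ?_ hA₂ hA₂ n n ?_ ?_ le_rfl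
    (fun i hi i' hi' hne => hcomp i hi i' hi' hne)
  · intro i hi j hj hne
    have hi2 : i ∈ A₂ := by rcases hi with h | h <;> exact h
    have hj2 : j ∈ A₂ := by rcases hj with h | h <;> exact h
    exact hdisj i hi2 j hj2 hne
  · intro i hi
    exact le_trans (Finset.card_le_card Finset.sdiff_subset)
      (le_of_eq (hJsub (hA₂J hi)).2)
  · intro i hi
    exact le_trans (Finset.card_le_card Finset.sdiff_subset)
      (le_of_eq (hJsub (hA₂J hi)).2)

end Main

end Stmt15Aux

/-- Baumgartner's characterization: for a tree `T` (of height `ω₁`), the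
finite specializing poset `S(T)` is c.c.c. (every antichain is countable) if and only if
`T` has no uncountable branch (no uncountable chain). -/
theorem stmt_15 {T : Type*} [PartialOrder T]
    (hwo : ∀ t : T, IsChain (· ≤ ·) (Set.Iio t) ∧ (Set.Iio t).IsWF)
    (hct : ∀ t : T, (Set.Iio t).Countable) :
    (∀ A : Set (SpecPoset T),
        (∀ p ∈ A, ∀ q ∈ A, p ≠ q → ¬∃ r, r ≤ p ∧ r ≤ q) → A.Countable) ↔
      ¬∃ C : Set T, IsChain (· ≤ ·) C ∧ ¬C.Countable := by
  classical
  constructor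
  · intro hccc
    rintro ⟨C, hch, hC⟩
    set s : T → SpecPoset T := fun t =>
      ⟨fun x => if x = t then some 0 else none,
       ⟨Set.Finite.subset (Set.finite_singleton t) (by
          intro x hx
          by_cases h : x = t
          · simp [h]
          · simp [h] at hx),
        by
          intro a b hab n ha hb
          by_cases h1 : a = t
          · by_cases h2 : b = t
            · subst h1; subst h2; exact absurd hab (lt_irrefl _)
            · simp [h2] at hb
          · simp [h1] at ha⟩⟩ with hsdef
    have hsinj : Function.Injective s := by
      intro t u h
      by_contra hne
      have h1 : (s t).1 t = some 0 := by simp [hsdef]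
      have h2 := h ▸ h1
      simp [hsdef, hne] at h2
    have hanti : ∀ p ∈ s '' C, ∀ q ∈ s '' C, p ≠ q → ¬∃ r, r ≤ p ∧ r ≤ q := by
      rintro p ⟨t, htC, rfl⟩ q ⟨u, huC, rfl⟩ hne
      have htu : t ≠ u := fun h => hne (by rw [h])
      rintro ⟨r, hrp, hrq⟩
      have hrt : r.1 t = some 0 := hrp t 0 (by simp [hsdef])
      have hru : r.1 u = some 0 := hrq u 0 (by simp [hsdef])
      rcases hch htC huC htu with h | h
      · exact r.2.2 t u (lt_of_le_of_ne h htu) 0 hrt hru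
      · exact r.2.2 u t (lt_of_le_of_ne h htu.symm) 0 hru hrt
    have hcnt := hccc (s '' C) hanti
    exact hC ((hcnt.preimage hsinj).mono (Set.subset_preimage_image s C))
  · intro hnb A hanti
    have hnc : ∀ C : Set T, IsChain (· ≤ ·) C → C.Countable := by
      intro C hch
      by_contra h
      exact hnb ⟨C, hch, h⟩
    exact Stmt15Aux.hard (fun b => (hwo b).1) hct hnc A hanti
end

section
/- Assuming CH, the poset P_{ω₂,ω₁} (Prikry's poset for adding ω₂-many almost mutually generic ω₁-partitions of ω₁) is ℵ₂-c.c. and countably closed. -/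
/-- The set of ordinals `< ω₁`, as a type representing `ω₁`. -/
abbrev Omega1 : Type 1 := ↥(Set.Iio ((Cardinal.aleph 1).ord : Ordinal.{0}))

/-- The set of ordinals `< ω₂`, as a type representing `ω₂`. -/
abbrev Omega2 : Type 1 := ↥(Set.Iio ((Cardinal.aleph 2).ord : Ordinal.{0}))

/-- Prikry's poset `P_{ω₂,ω₁}`: conditions are pairs `(S, 𝒜)` where `S` is a countable
partial function from `ω₂ × ω₁` to `ω₁` whose projection to the second coordinate is an
ordinal `< ω₁` (an initial segment `Iio γ`), and `𝒜` is a countable collection of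
countably infinite partial functions from `ω₂` to `ω₁` closed under cofinite
restrictions. -/
structure PrikryCond where
  S : Omega2 × Omega1 → Option Omega1
  𝒜 : Set (Omega2 → Option Omega1)
  S_ctble : {x | S x ≠ none}.Countable
  S_init : ∃ γ : Omega1, {β : Omega1 | ∃ α : Omega2, S (α, β) ≠ none} = Set.Iio γ
  𝒜_ctble : 𝒜.Countable
  𝒜_dom : ∀ f ∈ 𝒜, {α | f α ≠ none}.Countable ∧ {α | f α ≠ none}.Infinite
  𝒜_closed : ∀ f ∈ 𝒜, ∀ g : Omega2 → Option Omega1,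
    (∀ α, g α = f α ∨ g α = none) → {α | f α ≠ none ∧ g α = none}.Finite → g ∈ 𝒜

/-- The order on `P_{ω₂,ω₁}`: `q ≤ p` iff `S_q ⊇ S_p`, `𝒜_q ⊇ 𝒜_p`, and for every `β`
in the second-coordinate projection of `S_q` but not of `S_p` and every `f ∈ 𝒜_p`, there
is `α ∈ dom f` with `S_q(α, β) = f(α)`. -/
def PrikryLE (q p : PrikryCond) : Prop :=
  (∀ x v, p.S x = some v → q.S x = some v) ∧
  p.𝒜 ⊆ q.𝒜 ∧
  ∀ β : Omega1, (∃ α, q.S (α, β) ≠ none) → (¬∃ α, p.S (α, β) ≠ none) →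
    ∀ f ∈ p.𝒜, ∃ (α : Omega2) (v : Omega1), f α = some v ∧ q.S (α, β) = some v

/-!
Two conditions whose projections coincide and whose `S`-parts agree on their common domain
have a common extension, the union of both: no second coordinate `β` is new, so the third
clause of the order is vacuous. The union of a decreasing sequence is a lower bound for
the same reason, except that a new `β` gets its witnesses from a condition of the sequence.

For the chain condition, under CH there are only `ℵ₁` countable partial functions from a set
of size `ℵ₁` to `ω₁`. Build an increasing `ω₁`-chain of sets `H_α` of size `ℵ₁`, each
containing the domains of representatives of all restrictions `S_i ↾ H_β`, `β < α`. A
condition `j` outside the `ℵ₁` chosen representatives meets `⋃ H_α` in a countable set,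
contained in some `H_α` because `cof ω₁ = ℵ₁`; the representative of `S_j ↾ H_α` is then
compatible with `S_j`. Pigeonholing the `ℵ₂` conditions by projection first finishes the proof.
-/

open Cardinal Set

universe u

section Compatible

variable {X V : Type*}

def Compatible (f g : X → Option V) : Prop :=
  ∀ x v w, f x = some v → g x = some w → v = w

theorem Compatible.refl (f : X → Option V) : Compatible f f :=
  fun _ _ _ hv hw => Option.some.inj (hv.symm.trans hw)

theorem Compatible.symm {f g : X → Option V} (h : Compatible f g) : Compatible g f :=
  fun x v w hv hw => (h x w v hw hv).symm

open Classical in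
noncomputable def seqUnion (F : ℕ → X → Option V) (x : X) : Option V :=
  if h : ∃ n, F n x ≠ none then F (Nat.find h) x else none

theorem seqUnion_ne_none_iff {F : ℕ → X → Option V} {x : X} :
    seqUnion F x ≠ none ↔ ∃ n, F n x ≠ none := by
  classical
  unfold seqUnion
  split_ifs with h
  · exact iff_of_true (Nat.find_spec h) h
  · exact iff_of_false (not_not_intro rfl) h

theorem seqUnion_eq_some {F : ℕ → X → Option V} (hF : ∀ m n, Compatible (F m) (F n))
    {n : ℕ} {x : X} {v : V} (h : F n x = some v) : seqUnion F x = some v := by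
  classical
  have hx : ∃ n, F n x ≠ none := ⟨n, by simp [h]⟩
  obtain ⟨w, hw⟩ := Option.ne_none_iff_exists'.1 (Nat.find_spec hx)
  simp only [seqUnion, hx, dif_pos, hw, hF _ n x w v hw h]

end Compatible

theorem mk_countableSupport_le (hCH : continuum.{u} = ℵ₁) {Y V : Type u} (hY : #Y ≤ ℵ₁)
    (hV : #V ≤ ℵ₁) :
    #{f : Y → Option V | {y | f y ≠ none}.Countable} ≤ ℵ₁ := by
  have graph_countable (f : {f : Y → Option V | {y | f y ≠ none}.Countable}) :
      {p : Y × V | f.1 p.1 = some p.2}.Countable := by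
    refine MapsTo.countable_of_injOn (f := Prod.fst) (fun p hp => ?_) ?_ f.2
    · simp [show f.1 p.1 = some p.2 from hp]
    · exact fun p hp q hq hpq => Prod.ext hpq (Option.some.inj (hp.symm.trans (hpq ▸ hq)))
  let graph (f : {f : Y → Option V | {y | f y ≠ none}.Countable}) :
      {t : Set (Y × V) // #t ≤ ℵ₀} :=
    ⟨{p | f.1 p.1 = some p.2}, le_aleph0_iff_set_countable.2 (graph_countable f)⟩
  have hgraph : Function.Injective graph := fun f g h => Subtype.ext <| funext fun y =>
    Option.ext fun v => Set.ext_iff.1 (congrArg Subtype.val h) (y, v)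
  calc #{f : Y → Option V | {y | f y ≠ none}.Countable}
      ≤ #{t : Set (Y × V) // #t ≤ ℵ₀} := mk_le_of_injective hgraph
    _ ≤ max #(Y × V) ℵ₀ ^ ℵ₀ := mk_bounded_set_le _ _
    _ ≤ ℵ₁ ^ ℵ₀ := by
      refine power_le_power_right (max_le ?_ aleph0_lt_aleph_one.le)
      rw [mk_prod, lift_id, lift_id]
      exact (mul_le_mul' hY hV).trans (mul_eq_self aleph0_lt_aleph_one.le).le
    _ = ℵ₁ := by rw [← hCH, continuum_power_aleph0]

section Hull

variable {ι X V : Type u} [Nonempty ι] (g : ι → X → Option V)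

/-- Depends on `i` only through `s.domRestrict (g i)`, so `range (repOn g s)` is no larger than
the set of these restrictions. -/
noncomputable def repOn (s : Set X) (i : ι) : ι :=
  Function.invFun (fun j => s.domRestrict (g j)) (s.domRestrict (g i))

theorem domRestrict_repOn (s : Set X) (i : ι) :
    s.domRestrict (g (repOn g s i)) = s.domRestrict (g i) :=
  Function.invFun_eq (f := fun j => s.domRestrict (g j)) ⟨i, rfl⟩

theorem mk_range_repOn_le (hCH : continuum.{u} = ℵ₁) (hV : #V ≤ ℵ₁)
    (hg : ∀ i, {x | g i x ≠ none}.Countable) {s : Set X} (hs : #s ≤ ℵ₁) :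
    #(range (repOn g s)) ≤ ℵ₁ := by
  have hres : range (fun j => s.domRestrict (g j)) ⊆
      {f : s → Option V | {y | f y ≠ none}.Countable} := by
    rintro _ ⟨j, rfl⟩
    exact (hg j).preimage Subtype.val_injective
  calc #(range (repOn g s))
      = #(Function.invFun (fun j => s.domRestrict (g j)) ''
          range fun j => s.domRestrict (g j)) := by
        rw [← range_comp]
        rfl
    _ ≤ #(range fun j => s.domRestrict (g j)) := mk_image_le
    _ ≤ ℵ₁ := (mk_le_mk_of_subset hres).trans (mk_countableSupport_le hCH hs hV)

def hull (s : Set X) : Set X :=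
  ⋃ i ∈ range (repOn g s), {x | g i x ≠ none}

def hullChain (α : Ordinal.{u}) : Set X :=
  ⋃ β < α, hull g (hullChain β)
termination_by α

theorem hull_subset_hullChain {α β : Ordinal.{u}} (h : β < α) :
    hull g (hullChain g β) ⊆ hullChain g α := by
  rw [hullChain.eq_1 g α]
  exact subset_biUnion_of_mem (u := fun β => hull g (hullChain g β)) h

theorem exists_subset_hullChain {D : Set X} (hD : D.Countable)
    (hDC : D ⊆ hullChain g (ℵ₁ : Cardinal.{u}).ord) :
    ∃ α < (ℵ₁ : Cardinal.{u}).ord, D ⊆ hullChain g α := by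
  rw [hullChain.eq_1] at hDC
  choose β hβ hxβ using fun x : D => mem_iUnion₂.1 (hDC x.2)
  refine ⟨⨆ x, β x + 1, Ordinal.iSup_add_one_lt_of_lt_cof ?_ hβ, fun x hx => ?_⟩
  · rw [isRegular_aleph_one.cof_ord]
    exact (le_aleph0_iff_set_countable.2 hD).trans_lt aleph0_lt_aleph_one
  · refine hull_subset_hullChain g ?_ (hxβ ⟨x, hx⟩)
    exact (Order.lt_add_one_iff.2 le_rfl).trans_le
      (Ordinal.le_iSup (fun x : D => β x + 1) ⟨x, hx⟩)

variable (hCH : continuum.{u} = ℵ₁) (hV : #V ≤ ℵ₁) (hg : ∀ i, {x | g i x ≠ none}.Countable)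
include hCH hV hg

theorem mk_hull_le {s : Set X} (hs : #s ≤ ℵ₁) : #(hull g s) ≤ ℵ₁ := by
  refine (mk_biUnion_le _ _).trans ?_
  calc #(range (repOn g s)) * ⨆ i : range (repOn g s), #{x | g i x ≠ none}
      ≤ ℵ₁ * ℵ₀ := by
        gcongr
        · exact mk_range_repOn_le g hCH hV hg hs
        · exact ciSup_le' fun i => le_aleph0_iff_set_countable.2 (hg i)
    _ ≤ ℵ₁ := mul_le_of_le aleph0_lt_aleph_one.le le_rfl aleph0_lt_aleph_one.le

theorem mk_hullChain_le {α : Ordinal.{u}} (hα : α.card ≤ ℵ₁) : #(hullChain g α) ≤ ℵ₁ := by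
  induction α using WellFoundedLT.induction with
  | _ α ih =>
    rw [hullChain.eq_1]
    exact mk_biUnion_le_of_le hα aleph0_lt_aleph_one.le _ fun β hβ =>
      mk_hull_le g hCH hV hg (ih β hβ ((Ordinal.card_le_card hβ.le).trans hα))

omit [Nonempty ι] in
theorem exists_ne_compatible (hι : ℵ₁ < #ι) : ∃ i j, i ≠ j ∧ Compatible (g i) (g j) := by
  have : Nonempty ι := mk_ne_zero_iff.1 (pos_of_gt hι).ne'
  set ω₁ := (ℵ₁ : Cardinal.{u}).ord
  set J := ⋃ β < ω₁, range (repOn g (hullChain g β))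
  have hJ : #J ≤ ℵ₁ := mk_biUnion_le_of_le (card_ord _).le aleph0_lt_aleph_one.le _ fun β hβ =>
    mk_range_repOn_le g hCH hV hg (mk_hullChain_le g hCH hV hg (lt_ord.1 hβ).le)
  obtain ⟨j, hj⟩ : ∃ j, j ∉ J := by
    by_contra! h
    exact (hι.trans_le (mk_univ.symm.trans_le (mk_le_mk_of_subset fun i _ => h i))).not_ge hJ
  obtain ⟨α, hα, hD⟩ := exists_subset_hullChain g
    ((hg j).mono inter_subset_left : ({x | g j x ≠ none} ∩ hullChain g ω₁).Countable)
    inter_subset_right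
  set s := hullChain g α
  refine ⟨repOn g s j, j, fun h => hj (mem_biUnion hα ⟨j, h⟩), fun x v w hv hw => ?_⟩
  have hxC : x ∈ hullChain g ω₁ :=
    hull_subset_hullChain g hα
      (mem_biUnion (mem_range_self j) (Option.ne_none_iff_exists'.2 ⟨v, hv⟩))
  have hxs : x ∈ s := hD ⟨Option.ne_none_iff_exists'.2 ⟨w, hw⟩, hxC⟩
  have hagree := congrFun (domRestrict_repOn g s j) ⟨x, hxs⟩
  simp only [domRestrict_apply, hv, hw] at hagree
  exact Option.some.inj hagree

end Hull

theorem mk_omega1 : #Omega1 = ℵ₁ := by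
  rw [mk_Iio_ordinal, card_ord, lift_aleph]
  simp

theorem exists_iUnion_Iio_eq (γ : ℕ → Omega1) : ∃ γ' : Omega1, ⋃ n, Iio (γ n) = Iio γ' := by
  refine ⟨⟨⨆ n, (γ n).1, Ordinal.iSup_lt_of_lt_cof ?_ fun n => (γ n).2⟩, ?_⟩
  · rw [isRegular_aleph_one.cof_ord, mk_nat]
    exact aleph0_lt_aleph_one
  · ext β
    simp only [mem_iUnion, mem_Iio, ← Subtype.coe_lt_coe, Ordinal.lt_iSup_iff]

namespace PrikryCond

def proj (p : PrikryCond) : Set Omega1 := {β | ∃ α, p.S (α, β) ≠ none}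

noncomputable def height (p : PrikryCond) : Omega1 := p.S_init.choose

theorem proj_eq_Iio_height (p : PrikryCond) : p.proj = Iio p.height := p.S_init.choose_spec

instance : Preorder PrikryCond where
  le := PrikryLE
  le_refl _ := ⟨fun _ _ h => h, subset_rfl, fun _ hp hp' => absurd hp hp'⟩
  le_trans r q p hrq hqp := by
    refine ⟨fun x v h => hrq.1 x v (hqp.1 x v h), hqp.2.1.trans hrq.2.1, fun β hr hp f hf => ?_⟩
    by_cases hq : ∃ α, q.S (α, β) ≠ none
    · obtain ⟨α, v, hfv, hqv⟩ := hqp.2.2 β hq hp f hf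
      exact ⟨α, v, hfv, hrq.1 _ v hqv⟩
    · exact hrq.2.2 β hr hq f (hqp.2.1 hf)

theorem proj_subset_of_le {p q : PrikryCond} (h : q ≤ p) : p.proj ⊆ q.proj := by
  rintro β ⟨α, hα⟩
  obtain ⟨v, hv⟩ := Option.ne_none_iff_exists'.1 hα
  exact ⟨α, by simp [h.1 _ v hv]⟩

theorem compatible_of_le {p q : PrikryCond} (h : q ≤ p) : Compatible p.S q.S :=
  fun x v _ hv hw => Option.some.inj ((h.1 x v hv).symm.trans hw)

noncomputable def iUnion (f : ℕ → PrikryCond) : PrikryCond where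
  S := seqUnion fun n => (f n).S
  𝒜 := ⋃ n, (f n).𝒜
  S_ctble := by
    simp only [seqUnion_ne_none_iff, ofPred_exists]
    exact countable_iUnion fun n => (f n).S_ctble
  S_init := by
    obtain ⟨γ, hγ⟩ := exists_iUnion_Iio_eq fun n => (f n).height
    refine ⟨γ, ?_⟩
    simp only [← hγ, ← proj_eq_Iio_height, proj, seqUnion_ne_none_iff]
    ext β
    simp only [mem_ofPred_eq, mem_iUnion]
    exact exists_comm
  𝒜_ctble := countable_iUnion fun n => (f n).𝒜_ctble
  𝒜_dom g hg := by
    obtain ⟨n, hn⟩ := mem_iUnion.1 hg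
    exact (f n).𝒜_dom g hn
  𝒜_closed g hg g' hg' hfin := by
    obtain ⟨n, hn⟩ := mem_iUnion.1 hg
    exact mem_iUnion.2 ⟨n, (f n).𝒜_closed g hn g' hg' hfin⟩

theorem proj_iUnion (f : ℕ → PrikryCond) : (iUnion f).proj = ⋃ n, (f n).proj := by
  ext β
  simp only [proj, iUnion, seqUnion_ne_none_iff, mem_ofPred_eq, mem_iUnion]
  exact exists_comm

theorem iUnion_le (f : ℕ → PrikryCond) (n : ℕ) (hf : ∀ m k, Compatible (f m).S (f k).S)
    (hn : ∀ m, f m ≤ f n ∨ (f m).proj ⊆ (f n).proj) : iUnion f ≤ f n := by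
  refine ⟨fun x v h => seqUnion_eq_some hf h, subset_iUnion (fun m => (f m).𝒜) n, ?_⟩
  intro β hβ hβn g hg
  obtain ⟨m, hm⟩ := mem_iUnion.1 ((proj_iUnion f).subset hβ)
  rcases hn m with hle | hsub
  · obtain ⟨α, v, hgv, hS⟩ := hle.2.2 β hm hβn g hg
    exact ⟨α, v, hgv, seqUnion_eq_some hf hS⟩
  · exact absurd (hsub hm) hβn

theorem exists_le_forall_of_antitone (f : ℕ → PrikryCond) (hf : Antitone f) :
    ∃ b, ∀ n, b ≤ f n := by
  refine ⟨iUnion f, fun n => iUnion_le f n (fun m k => ?_) fun m => ?_⟩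
  · rcases le_total m k with h | h
    · exact compatible_of_le (hf h)
    · exact (compatible_of_le (hf h)).symm
  · rcases le_total n m with h | h
    · exact Or.inl (hf h)
    · exact Or.inr (proj_subset_of_le (hf h))

theorem exists_le_le_of_compatible (p q : PrikryCond) (hproj : p.proj = q.proj)
    (hS : Compatible p.S q.S) : ∃ r, r ≤ p ∧ r ≤ q := by
  let f : ℕ → PrikryCond := fun n => if n = 0 then p else q
  have hf : ∀ m k, Compatible (f m).S (f k).S := by
    intro m k
    by_cases hm : m = 0 <;> by_cases hk : k = 0 <;>
      simp [f, hm, hk, Compatible.refl, hS, hS.symm]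
  have hproj_f : ∀ m, (f m).proj = p.proj := by
    intro m
    by_cases hm : m = 0 <;> simp [f, hm, hproj]
  have hsub : ∀ m k, (f m).proj ⊆ (f k).proj := fun m k => by rw [hproj_f, hproj_f]
  exact ⟨iUnion f, iUnion_le f 0 hf fun m => Or.inr (hsub m 0),
    iUnion_le f 1 hf fun m => Or.inr (hsub m 1)⟩

theorem mk_antichain_lt (hCH : continuum.{0} = ℵ₁) (A : Set PrikryCond)
    (hA : ∀ p ∈ A, ∀ q ∈ A, p ≠ q → ¬∃ r, r ≤ p ∧ r ≤ q) : #A < aleph 2 := by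
  have hCH' : continuum.{1} = ℵ₁ := by
    rw [← lift_continuum.{1, 0}, hCH, lift_aleph]
    simp
  have h12 : (ℵ₁ : Cardinal.{1}) < aleph 2 := aleph_lt_aleph.2 one_lt_two
  have hreg : (aleph 2 : Cardinal.{1}).IsRegular := by
    simpa [one_add_one_eq_two] using isRegular_aleph_add_one 1
  by_contra! hA2
  obtain ⟨γ, hγ⟩ := infinite_pigeonhole_card (fun p : A => p.1.height) (aleph 2) hA2
    (aleph0_le_aleph 2) (by rwa [hreg.cof_ord, mk_omega1])
  obtain ⟨⟨⟨p, hpA⟩, hp⟩, ⟨⟨q, hqA⟩, hq⟩, hne, hpq⟩ :=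
    exists_ne_compatible (fun p : (fun p : A => p.1.height) ⁻¹' {γ} => p.1.1.S) hCH' mk_omega1.le
      (fun p => p.1.1.S_ctble) (h12.trans_le hγ)
  have hproj : p.proj = q.proj := by
    have hp' : p.height = γ := hp
    have hq' : q.height = γ := hq
    rw [proj_eq_Iio_height, proj_eq_Iio_height, hp', hq']
  exact hA p hpA q hqA (fun h => hne (by subst h; rfl))
    (exists_le_le_of_compatible p q hproj hpq)

end PrikryCond

/-- Assuming CH, the poset `P_{ω₂,ω₁}` is `ℵ₂`-c.c. (every antichain has
size `< ℵ₂`) and countably closed (every countable decreasing sequence has a lower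
bound). -/
theorem stmt_19 (hCH : Cardinal.continuum.{0} = Cardinal.aleph 1) :
    (∀ A : Set PrikryCond,
      (∀ p ∈ A, ∀ q ∈ A, p ≠ q → ¬∃ r, PrikryLE r p ∧ PrikryLE r q) →
      Cardinal.mk A < Cardinal.aleph 2) ∧
    (∀ f : ℕ → PrikryCond, (∀ n, PrikryLE (f (n + 1)) (f n)) →
      ∃ b, ∀ n, PrikryLE b (f n)) :=
  ⟨PrikryCond.mk_antichain_lt hCH, fun f hf =>
    PrikryCond.exists_le_forall_of_antitone f (antitone_nat_of_succ_le hf)⟩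
end
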